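/- arXiv:1611.00507 — 9 statements merged into one kernel-verified Lean document; each statement's English description precedes it below -/
import Mathlib

section
/- Let ψ : ℝⁿ → ℝ be concave, let v₁, …, v_m ∈ ℝⁿ (m ≥ 1), and set u_t = v₁ + ⋯ + v_t for t ∈ {1,…,m}. Suppose that for each t ∈ {1,…,m}, y_t ∈ ℝⁿ is a supergradient of ψ at u_t. Then ∑_{t=1}^m ⟨v_t, y_t⟩ ≤ ψ(u_m) − ψ(0). (Applied with v_t = A_t x̃_t and y_t = ỹ_t satisfying the maximizer condition of the simultaneous-update algorithm, this is exactly Lemma 1's duality-gap bound P_sim − D_sim ≥ ψ*(ỹ_{m+1}) + ψ(0).) -/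
open RealInnerProductSpace

/-- `y` is a supergradient of `ψ` at `u`. -/
def IsSupergradient {n : ℕ} (ψ : EuclideanSpace ℝ (Fin n) → ℝ)
    (u y : EuclideanSpace ℝ (Fin n)) : Prop :=
  ∀ u', ψ u' ≤ ψ u + ⟪y, u' - u⟫

namespace IsSupergradient

variable {n : ℕ} {ψ : EuclideanSpace ℝ (Fin n) → ℝ}

theorem inner_sub_le {u w y : EuclideanSpace ℝ (Fin n)} (h : IsSupergradient ψ w y) :
    ⟪w - u, y⟫ ≤ ψ w - ψ u := by
  have := h u
  rw [← neg_sub w u, inner_neg_right, real_inner_comm] at this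
  linarith

theorem sum_inner_sub_le {m : ℕ} {u y : ℕ → EuclideanSpace ℝ (Fin n)}
    (hy : ∀ t < m, IsSupergradient ψ (u (t + 1)) (y t)) :
    ∑ t ∈ Finset.range m, ⟪u (t + 1) - u t, y t⟫ ≤ ψ (u m) - ψ (u 0) :=
  calc ∑ t ∈ Finset.range m, ⟪u (t + 1) - u t, y t⟫
      ≤ ∑ t ∈ Finset.range m, (ψ (u (t + 1)) - ψ (u t)) :=
        Finset.sum_le_sum fun t ht ↦ (hy t (Finset.mem_range.mp ht)).inner_sub_le
    _ = ψ (u m) - ψ (u 0) := Finset.sum_range_sub (fun t ↦ ψ (u t)) m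

end IsSupergradient

theorem stmt_0_general {n : ℕ} (m : ℕ)
    (ψ : EuclideanSpace ℝ (Fin n) → ℝ)
    (v y u : ℕ → EuclideanSpace ℝ (Fin n))
    (hu : ∀ t, u t = ∑ s ∈ Finset.range t, v s)
    (hy : ∀ t < m, IsSupergradient ψ (u (t + 1)) (y t)) :
    ∑ t ∈ Finset.range m, ⟪v t, y t⟫ ≤ ψ (u m) - ψ 0 := by
  have hv : ∀ t, v t = u (t + 1) - u t := fun t ↦ by
    simp only [hu, Finset.sum_range_succ, add_sub_cancel_left]
  have hu0 : u 0 = 0 := by simp only [hu, Finset.sum_range_zero]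
  simpa only [← hv, hu0] using IsSupergradient.sum_inner_sub_le hy

/-- Lemma 1, simultaneous-update duality gap bound:
with `u t = v 0 + ⋯ + v (t-1)` and `y t` a supergradient of `ψ` at `u (t+1)`
(i.e. `yₜ` a supergradient at `uₜ` in 1-based indexing),
`∑ₜ ⟨vₜ, yₜ⟩ ≤ ψ(u_m) − ψ(0)`. -/
theorem stmt_0 {n : ℕ} (m : ℕ) (hm : 1 ≤ m)
    (ψ : EuclideanSpace ℝ (Fin n) → ℝ) (hψ : ConcaveOn ℝ Set.univ ψ)
    (v y u : ℕ → EuclideanSpace ℝ (Fin n))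
    (hu : ∀ t, u t = ∑ s ∈ Finset.range t, v s)
    (hy : ∀ t < m, IsSupergradient ψ (u (t + 1)) (y t)) :
    ∑ t ∈ Finset.range m, ⟪v t, y t⟫ ≤ ψ (u m) - ψ 0 :=
  stmt_0_general m ψ v y u hu hy
end

section
/- Let ψ : ℝⁿ → ℝ be concave, let v₁, …, v_m ∈ ℝⁿ (m ≥ 1), and set u₀ = 0 and u_t = v₁ + ⋯ + v_t for t ∈ {1,…,m}. Suppose that for each t ∈ {1,…,m+1}, y_t ∈ ℝⁿ is a supergradient of ψ at u_{t−1}. Then ∑_{t=1}^m ⟨v_t, y_t⟩ ≤ ψ(u_m) − ψ(0) + ∑_{t=1}^m ⟨v_t, y_t − y_{t+1}⟩. (Applied with v_t = A_t x̂_t, this is Lemma 1's duality-gap bound for the sequential-update algorithm: P_seq − D_seq ≥ ψ*(ŷ_{m+1}) + ψ(0) + ∑_t ⟨A_t x̂_t, ŷ_{t+1} − ŷ_t⟩.) -/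
/-
The supergradient `y (t + 1)` at `u (t + 1)`, tested at `u t = u (t + 1) - v t`, gives
`⟪v t, y (t + 1)⟫ ≤ ψ (u (t + 1)) - ψ (u t)`; summing over `t` telescopes to `ψ (u m) - ψ 0`,
and the claim is this bound with `∑ ⟪v t, y t⟫` added to both sides.
-/

open RealInnerProductSpace

theorem IsSupergradient.inner_sub_le_s1 {n : ℕ} {ψ : EuclideanSpace ℝ (Fin n) → ℝ}
    {u y : EuclideanSpace ℝ (Fin n)} (h : IsSupergradient ψ u y) (u' : EuclideanSpace ℝ (Fin n)) :
    ⟪u - u', y⟫ ≤ ψ u - ψ u' := by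
  have := h u'
  rw [← neg_sub, inner_neg_right, real_inner_comm] at this
  linarith

theorem sum_inner_le_sub_of_isSupergradient {n : ℕ} (m : ℕ)
    (ψ : EuclideanSpace ℝ (Fin n) → ℝ) (v y u : ℕ → EuclideanSpace ℝ (Fin n))
    (hu : ∀ t, u (t + 1) = u t + v t)
    (hy : ∀ t ∈ Finset.range m, IsSupergradient ψ (u (t + 1)) (y (t + 1))) :
    ∑ t ∈ Finset.range m, ⟪v t, y (t + 1)⟫ ≤ ψ (u m) - ψ (u 0) := by
  calc ∑ t ∈ Finset.range m, ⟪v t, y (t + 1)⟫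
      ≤ ∑ t ∈ Finset.range m, (ψ (u (t + 1)) - ψ (u t)) := by
        refine Finset.sum_le_sum fun t ht => ?_
        simpa [hu t] using (hy t ht).inner_sub_le_s1 (u t)
    _ = ψ (u m) - ψ (u 0) := Finset.sum_range_sub (fun t => ψ (u t)) m

theorem stmt_1_general {n : ℕ} (m : ℕ)
    (ψ : EuclideanSpace ℝ (Fin n) → ℝ)
    (v y u : ℕ → EuclideanSpace ℝ (Fin n))
    (hu : ∀ t, u t = ∑ s ∈ Finset.range t, v s)
    (hy : ∀ t ≤ m, IsSupergradient ψ (u t) (y t)) :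
    ∑ t ∈ Finset.range m, ⟪v t, y t⟫ ≤
      ψ (u m) - ψ 0 + ∑ t ∈ Finset.range m, ⟪v t, y t - y (t + 1)⟫ := by
  have hbound := sum_inner_le_sub_of_isSupergradient m ψ v y u
    (fun t => by simp only [hu, Finset.sum_range_succ])
    (fun t ht => hy (t + 1) (Finset.mem_range.mp ht))
  have hu0 : u 0 = 0 := by simp [hu]
  simp only [inner_sub_right, Finset.sum_sub_distrib, hu0] at hbound ⊢
  linarith

/-- Lemma 1, sequential-update duality gap bound:
with `u 0 = 0`, `u t = v 0 + ⋯ + v (t-1)` and, for `t ∈ {0,…,m}`,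
`y t` a supergradient of `ψ` at `u t` (i.e. `yₜ` a supergradient at `u_{t−1}`
in 1-based indexing, for `t ∈ {1,…,m+1}`),
`∑ₜ ⟨vₜ, yₜ⟩ ≤ ψ(u_m) − ψ(0) + ∑ₜ ⟨vₜ, yₜ − y_{t+1}⟩`. -/
theorem stmt_1 {n : ℕ} (m : ℕ) (hm : 1 ≤ m)
    (ψ : EuclideanSpace ℝ (Fin n) → ℝ) (hψ : ConcaveOn ℝ Set.univ ψ)
    (v y u : ℕ → EuclideanSpace ℝ (Fin n))
    (hu : ∀ t, u t = ∑ s ∈ Finset.range t, v s)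
    (hy : ∀ t ≤ m, IsSupergradient ψ (u t) (y t)) :
    ∑ t ∈ Finset.range m, ⟪v t, y t⟫ ≤
      ψ (u m) - ψ 0 + ∑ t ∈ Finset.range m, ⟪v t, y t - y (t + 1)⟫ :=
  stmt_1_general m ψ v y u hu hy
end

section
/- (Theorem 1, sequential update.) Let K ⊆ ℝⁿ be a closed convex cone with dual cone K*, and let ψ : ℝⁿ → ℝ be concave with ψ(0) = 0 satisfying Assumption 1 on K. For t ∈ {1,…,m} let F_t ⊆ ℝᵏ and let A_t : ℝᵏ → ℝⁿ be linear with A_t x ∈ K for every x ∈ F_t. Set u₀ = 0 and u_t = ∑_{s=1}^t A_s x̂_s. Suppose x̂_t ∈ F_t and ŷ_t ∈ ℝⁿ satisfy: for t ∈ {1,…,m}, ŷ_t is a supergradient of ψ at u_{t−1} and ⟨x̂_t, A_tᵀ ŷ_t⟩ ≥ ⟨x, A_tᵀ ŷ_t⟩ for all x ∈ F_t; and ŷ_{m+1} is a supergradient of ψ at u_m such that z − ŷ_{m+1} ∈ K* for every supergradient z of ψ at u_m. Let ᾱ ∈ ℝ satisfy ⟨y, u⟩ ≥ (ᾱ + 1)·ψ(u)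 for every u ∈ K and every supergradient y of ψ at u. Then for every choice of x'_t ∈ F_t and every w ∈ ℝⁿ: (1 − ᾱ)·ψ(u_m) ≥ ∑_{t=1}^m ⟨A_t x'_t, ŷ_{m+1}⟩ − ⟨ŷ_{m+1}, w⟩ + ψ(w) + ∑_{t=1}^m ⟨A_t x̂_t, ŷ_{t+1} − ŷ_t⟩. (This says P_seq ≥ (1/(1 − ᾱ_ψ))·(D★ + ∑_t ⟨A_t x̂_t, ŷ_{t+1} − ŷ_t⟩).) -/
/-!
Write `Δ_t = A_t x̂_t = u_{t+1} - u_t`. By Assumption 1 the minimal supergradient `ŷ_{m+1}` at `u_m`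
lies below every supergradient at the smaller points `u_t` in the dual order, so optimality of
`x̂_t` against `ŷ_t` gives `⟨A_t x'_t, ŷ_{m+1}⟩ ≤ ⟨Δ_t, ŷ_t⟩`. The supergradient inequality at
`u_{t+1}` gives `⟨Δ_t, ŷ_{t+1}⟩ ≤ ψ(u_{t+1}) - ψ(u_t)`, which telescopes to `ψ(u_m)`. Finally
`ψ(w) - ⟨ŷ_{m+1}, w⟩ ≤ ψ(u_m) - ⟨ŷ_{m+1}, u_m⟩ ≤ -ᾱ ψ(u_m)` by the supergradient inequality at
`u_m` and the definition of `ᾱ`.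
-/

open RealInnerProductSpace

def dualCone {n : ℕ} (K : Set (EuclideanSpace ℝ (Fin n))) :
    Set (EuclideanSpace ℝ (Fin n)) :=
  {y | ∀ u ∈ K, 0 ≤ ⟪y, u⟫}

/-- Assumption 1 of the paper. -/
def Assumption1 {n : ℕ} (K : Set (EuclideanSpace ℝ (Fin n)))
    (ψ : EuclideanSpace ℝ (Fin n) → ℝ) : Prop :=
  ∀ u ∈ K, ∀ v ∈ K, u - v ∈ K →
    ∃ y, IsSupergradient ψ u y ∧
      ∀ z, IsSupergradient ψ v z → z - y ∈ dualCone K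

open Finset

section Cone

variable {E : Type*} [AddCommMonoid E] [Module ℝ E] {K : Set E}

theorem Convex.add_mem_of_smul_mem (hconv : Convex ℝ K)
    (hcone : ∀ c : ℝ, 0 < c → ∀ u ∈ K, c • u ∈ K) {a b : E} (ha : a ∈ K) (hb : b ∈ K) :
    a + b ∈ K := by
  have hmid : (1 / 2 : ℝ) • a + (1 / 2 : ℝ) • b ∈ K :=
    hconv ha hb (by norm_num) (by norm_num) (by norm_num)
  have h2 := hcone 2 two_pos _ hmid
  rwa [smul_add, smul_smul, smul_smul, mul_one_div_cancel two_ne_zero, one_smul, one_smul] at h2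

theorem IsClosed.zero_mem_of_smul_mem [TopologicalSpace E] [ContinuousSMul ℝ E]
    (hclosed : IsClosed K)
    (hcone : ∀ c : ℝ, 0 < c → ∀ u ∈ K, c • u ∈ K) {a : E} (ha : a ∈ K) : (0 : E) ∈ K := by
  have hlim : Filter.Tendsto (fun c : ℝ => c • a) (nhdsWithin 0 (Set.Ioi 0)) (nhds 0) :=
    ((continuous_id.smul continuous_const).tendsto' 0 0 (zero_smul ℝ a)).mono_left
      nhdsWithin_le_nhds
  exact hclosed.mem_of_tendsto hlim (eventually_nhdsWithin_of_forall fun c hc => hcone c hc a ha)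

end Cone

theorem Convex.sum_range_sub_sum_range_mem {E : Type*} [AddCommGroup E] [Module ℝ E] {K : Set E}
    (hconv : Convex ℝ K) (hcone : ∀ c : ℝ, 0 < c → ∀ u ∈ K, c • u ∈ K) (h0 : (0 : E) ∈ K)
    {f : ℕ → E} {m s t : ℕ} (hf : ∀ i < m, f i ∈ K) (hst : s ≤ t) (htm : t ≤ m) :
    ∑ i ∈ range t, f i - ∑ i ∈ range s, f i ∈ K := by
  rw [← sum_Ico_eq_sub _ hst]
  refine sum_induction _ (· ∈ K) (fun _ _ => hconv.add_mem_of_smul_mem hcone) h0 ?_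
  exact fun i hi => hf i (by grind)

section Supergradient

variable {n : ℕ} {ψ : EuclideanSpace ℝ (Fin n) → ℝ}

theorem IsSupergradient.inner_sub_le_sub {u y : EuclideanSpace ℝ (Fin n)}
    (hy : IsSupergradient ψ u y) (v : EuclideanSpace ℝ (Fin n)) : ⟪y, u - v⟫ ≤ ψ u - ψ v := by
  have h := hy v
  rw [← neg_sub, inner_neg_right] at h
  linarith

theorem sum_inner_sub_supergradient_le {u g : ℕ → EuclideanSpace ℝ (Fin n)} {m : ℕ}
    (hg : ∀ t ≤ m, IsSupergradient ψ (u t) (g t)) :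
    ∑ t ∈ range m, ⟪u (t + 1) - u t, g (t + 1)⟫ ≤ ψ (u m) - ψ (u 0) := by
  calc ∑ t ∈ range m, ⟪u (t + 1) - u t, g (t + 1)⟫
      ≤ ∑ t ∈ range m, (ψ (u (t + 1)) - ψ (u t)) := by
        refine sum_le_sum fun t ht => ?_
        rw [real_inner_comm]
        exact (hg (t + 1) (mem_range.mp ht)).inner_sub_le_sub _
    _ = ψ (u m) - ψ (u 0) := sum_range_sub (fun t => ψ (u t)) m

theorem inner_le_inner_of_sub_mem_dualCone {K : Set (EuclideanSpace ℝ (Fin n))}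
    {y z x : EuclideanSpace ℝ (Fin n)} (hyz : z - y ∈ dualCone K) (hx : x ∈ K) :
    ⟪y, x⟫ ≤ ⟪z, x⟫ := by
  have h := hyz x hx
  rw [inner_sub_left] at h
  linarith

theorem Assumption1.inner_le_inner {K : Set (EuclideanSpace ℝ (Fin n))} (h : Assumption1 K ψ)
    {u v yu yv x : EuclideanSpace ℝ (Fin n)} (hu : u ∈ K) (hv : v ∈ K) (huv : u - v ∈ K)
    (hyu : ∀ z, IsSupergradient ψ u z → z - yu ∈ dualCone K) (hyv : IsSupergradient ψ v yv)
    (hx : x ∈ K) : ⟪yu, x⟫ ≤ ⟪yv, x⟫ := by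
  obtain ⟨y, hy, hymin⟩ := h u hu v hv huv
  exact (inner_le_inner_of_sub_mem_dualCone (hyu y hy) hx).trans
    (inner_le_inner_of_sub_mem_dualCone (hymin yv hyv) hx)

end Supergradient

theorem stmt_4_general {n k m : ℕ}
    (K : Set (EuclideanSpace ℝ (Fin n)))
    (hKclosed : IsClosed K) (hKconvex : Convex ℝ K)
    (hKcone : ∀ c : ℝ, 0 < c → ∀ u ∈ K, c • u ∈ K)
    (ψ : EuclideanSpace ℝ (Fin n) → ℝ)
    (hψ0 : ψ 0 = 0)
    (hassum : Assumption1 K ψ)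
    (F : ℕ → Set (EuclideanSpace ℝ (Fin k)))
    (A : ℕ → EuclideanSpace ℝ (Fin k) →ₗ[ℝ] EuclideanSpace ℝ (Fin n))
    (hA : ∀ t < m, ∀ x ∈ F t, A t x ∈ K)
    (xt : ℕ → EuclideanSpace ℝ (Fin k))
    (hxt : ∀ t < m, xt t ∈ F t)
    (u : ℕ → EuclideanSpace ℝ (Fin n))
    (hu : ∀ t, u t = ∑ s ∈ Finset.range t, A s (xt s))
    (y : ℕ → EuclideanSpace ℝ (Fin n))
    (hy : ∀ t < m, IsSupergradient ψ (u t) (y t))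
    (hmax : ∀ t < m, ∀ x ∈ F t, ⟪A t x, y t⟫ ≤ ⟪A t (xt t), y t⟫)
    (hylast : IsSupergradient ψ (u m) (y m))
    (hylastmin : ∀ z, IsSupergradient ψ (u m) z → z - y m ∈ dualCone K)
    (α : ℝ)
    (hα : ∀ v ∈ K, ∀ z, IsSupergradient ψ v z → (α + 1) * ψ v ≤ ⟪z, v⟫)
    (x' : ℕ → EuclideanSpace ℝ (Fin k))
    (hx' : ∀ t < m, x' t ∈ F t)
    (w : EuclideanSpace ℝ (Fin n)) :
    (∑ t ∈ Finset.range m, ⟪A t (x' t), y m⟫) - ⟪y m, w⟫ + ψ w +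
        ∑ t ∈ Finset.range m, ⟪A t (xt t), y (t + 1) - y t⟫ ≤
      (1 - α) * ψ (u m) := by
  obtain rfl | hm := Nat.eq_zero_or_pos m
  · have h := hylast.inner_sub_le_sub w
    simp_all [inner_sub_right]
  have hu0 : u 0 = 0 := by simp [hu]
  have h0K : (0 : EuclideanSpace ℝ (Fin n)) ∈ K :=
    hKclosed.zero_mem_of_smul_mem hKcone (hA 0 hm _ (hxt 0 hm))
  have hincr : ∀ t, A t (xt t) = u (t + 1) - u t := fun t => by
    rw [hu, hu, sum_range_succ, add_sub_cancel_left]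
  have hdiffK : ∀ s t, s ≤ t → t ≤ m → u t - u s ∈ K := fun s t hst htm => by
    rw [hu, hu]
    exact hKconvex.sum_range_sub_sum_range_mem hKcone h0K (fun i hi => hA i hi _ (hxt i hi))
      hst htm
  have huK : ∀ t ≤ m, u t ∈ K := fun t ht => by simpa [hu0] using hdiffK 0 t t.zero_le ht
  have hsg : ∀ t ≤ m, IsSupergradient ψ (u t) (y t) := fun t ht =>
    ht.lt_or_eq.elim (hy t) fun h => h ▸ hylast
  have hterm : ∀ t ∈ range m,
      ⟪A t (x' t), y m⟫ + ⟪A t (xt t), y (t + 1) - y t⟫ ≤ ⟪u (t + 1) - u t, y (t + 1)⟫ := by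
    intro t ht
    have ht := mem_range.mp ht
    have hdom : ⟪y m, A t (x' t)⟫ ≤ ⟪y t, A t (x' t)⟫ :=
      hassum.inner_le_inner (huK m le_rfl) (huK t ht.le) (hdiffK t m ht.le le_rfl) hylastmin
        (hy t ht) (hA t ht _ (hx' t ht))
    rw [real_inner_comm _ (y m), real_inner_comm _ (y t)] at hdom
    rw [← hincr, inner_sub_right, real_inner_comm (y (t + 1))]
    linarith [hmax t ht _ (hx' t ht)]
  have htelescope := sum_inner_sub_supergradient_le hsg
  have hw := hylast.inner_sub_le_sub w
  have hα' := hα _ (huK m le_rfl) _ hylast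
  rw [inner_sub_right] at hw
  rw [hu0, hψ0] at htelescope
  linarith [sum_le_sum hterm, sum_add_distrib (s := range m)
    (f := fun t => ⟪A t (x' t), y m⟫) (g := fun t => ⟪A t (xt t), y (t + 1) - y t⟫)]

/-- Theorem 1, sequential update.  Indices are 0-based: `u t` is the sum of
the first `t` terms `A s (xt s)`; for `t < m`, `y t` is a supergradient of
`ψ` at `u t` (`ŷₜ` at `u_{t−1}` in 1-based indexing), and `y m` is the
minimal supergradient at `u m` (playing the role of `ŷ_{m+1}`). -/
theorem stmt_4 {n k m : ℕ}
    (K : Set (EuclideanSpace ℝ (Fin n)))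
    (hKclosed : IsClosed K) (hKconvex : Convex ℝ K)
    (hKcone : ∀ c : ℝ, 0 < c → ∀ u ∈ K, c • u ∈ K)
    (ψ : EuclideanSpace ℝ (Fin n) → ℝ)
    (hψ : ConcaveOn ℝ Set.univ ψ) (hψ0 : ψ 0 = 0)
    (hassum : Assumption1 K ψ)
    (F : ℕ → Set (EuclideanSpace ℝ (Fin k)))
    (A : ℕ → EuclideanSpace ℝ (Fin k) →ₗ[ℝ] EuclideanSpace ℝ (Fin n))
    (hA : ∀ t < m, ∀ x ∈ F t, A t x ∈ K)
    (xt : ℕ → EuclideanSpace ℝ (Fin k))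
    (hxt : ∀ t < m, xt t ∈ F t)
    (u : ℕ → EuclideanSpace ℝ (Fin n))
    (hu : ∀ t, u t = ∑ s ∈ Finset.range t, A s (xt s))
    (y : ℕ → EuclideanSpace ℝ (Fin n))
    (hy : ∀ t < m, IsSupergradient ψ (u t) (y t))
    (hmax : ∀ t < m, ∀ x ∈ F t, ⟪A t x, y t⟫ ≤ ⟪A t (xt t), y t⟫)
    (hylast : IsSupergradient ψ (u m) (y m))
    (hylastmin : ∀ z, IsSupergradient ψ (u m) z → z - y m ∈ dualCone K)
    (α : ℝ)
    (hα : ∀ v ∈ K, ∀ z, IsSupergradient ψ v z → (α + 1) * ψ v ≤ ⟪z, v⟫)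
    (x' : ℕ → EuclideanSpace ℝ (Fin k))
    (hx' : ∀ t < m, x' t ∈ F t)
    (w : EuclideanSpace ℝ (Fin n)) :
    (∑ t ∈ Finset.range m, ⟪A t (x' t), y m⟫) - ⟪y m, w⟫ + ψ w +
        ∑ t ∈ Finset.range m, ⟪A t (xt t), y (t + 1) - y t⟫ ≤
      (1 - α) * ψ (u m) :=
  stmt_4_general K hKclosed hKconvex hKcone ψ hψ0 hassum F A hA xt hxt u hu y hy hmax hylast
    hylastmin α hα x' hx' w
end

section
/- (Lower bound on the optimal dual variable of the online LP.) Let m, n, k ≥ 1. For t ∈ {1,…,m} let c_t ∈ ℝᵏ and let B_t be a real n×k matrix with all entries nonnegative. Let l > 0 satisfy (c_t)_j < l·(B_t)_{ij} for every t, i, j with (B_t)_{ij} > 0. Let Δ = {x ∈ ℝᵏ : x_j ≥ 0 for all j, ∑_j x_j ≤ 1}. Suppose y ∈ ℝⁿ with y_i ≤ 0 for all i, and x_t ∈ Δ for all t, satisfy: (i) ⟨x_t, c_t + B_tᵀ y⟩ ≥ ⟨x, c_t + B_tᵀ y⟩ for all x ∈ Δ and all t; and (ii) for every i, if y_i < 0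 then (∑_{t=1}^m B_t x_t)_i = 1. Then y_i > −l for every i ∈ {1,…,n}. -/
/-!
Suppose `y i ≤ -l`. Then `y i < 0`, so by complementary slackness row `i` of `∑ₜ Bₜ xₜ` equals `1`,
and some `xₜ` puts positive mass on a column `j` with `Bₜ i j > 0`. For that column the reduced
profit is `cₜ j + (Bₜᵀ y) j ≤ cₜ j + Bₜ i j * y i ≤ cₜ j - l * Bₜ i j < 0`, so removing the mass
on `j` would strictly improve `xₜ`, contradicting its optimality over the simplex.
-/

open Finset Matrix

lemma Finset.sum_update_zero {ι M : Type*} [Fintype ι] [DecidableEq ι] [AddCommGroup M]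
    (f : ι → M) (j : ι) : ∑ i, Function.update f j 0 i = ∑ i, f i - f j := by
  rw [sum_update_of_mem (mem_univ j), zero_add, sdiff_singleton_eq_erase,
    sum_erase_eq_sub (mem_univ j)]

-- Zeroing coordinate `j` keeps `x` feasible and lowers the objective by exactly `x j * a j`.
lemma mul_nonneg_of_isMaxOn_subsimplex {ι : Type*} [Fintype ι] [DecidableEq ι] {a x : ι → ℝ}
    (hx0 : ∀ j, 0 ≤ x j) (hx1 : ∑ j, x j ≤ 1)
    (hopt : ∀ x' : ι → ℝ, (∀ j, 0 ≤ x' j) → ∑ j, x' j ≤ 1 → ∑ j, x' j * a j ≤ ∑ j, x j * a j)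
    (j : ι) : 0 ≤ x j * a j := by
  set x' := Function.update x j 0
  have hx'0 : ∀ j', 0 ≤ x' j' := by
    intro j'
    rcases eq_or_ne j' j with rfl | hj'
    · simp [x']
    · simpa [x', hj'] using hx0 j'
  have hprofit_x' : ∑ j', x' j' * a j' = ∑ j', x j' * a j' - x j * a j := by
    have : (fun j' => x' j' * a j') = Function.update (fun j' => x j' * a j') j 0 := by
      ext j'
      rcases eq_or_ne j' j with rfl | hj'
      · simp [x']
      · simp [x', hj']
    rw [this, sum_update_zero]
  have := hopt x' hx'0 (by linarith [sum_update_zero x j, hx0 j])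
  linarith

lemma Matrix.transpose_mulVec_apply_le {m n : Type*} [Fintype m] {B : Matrix m n ℝ}
    (hB : ∀ i j, 0 ≤ B i j) {y : m → ℝ} (hy : ∀ i, y i ≤ 0) (i : m) (j : n) :
    (Bᵀ *ᵥ y) j ≤ y i * B i j := by
  have hterm : ∀ i', 0 ≤ -(y i' * B i' j) := fun i' =>
    neg_nonneg.2 (mul_nonpos_of_nonpos_of_nonneg (hy i') (hB i' j))
  have := single_le_sum (fun i' _ => hterm i') (mem_univ i)
  rw [sum_neg_distrib] at this
  rw [mulVec_transpose]
  exact le_of_neg_le_neg this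

theorem stmt_11_general {m n k : ℕ}
    (c : Fin m → Fin k → ℝ) (B : Fin m → Matrix (Fin n) (Fin k) ℝ)
    (hB : ∀ t i j, 0 ≤ B t i j)
    (l : ℝ) (hl : 0 < l)
    (hlc : ∀ t i j, 0 < B t i j → c t j < l * B t i j)
    (y : Fin n → ℝ) (hy : ∀ i, y i ≤ 0)
    (x : Fin m → Fin k → ℝ)
    (hx : ∀ t, (∀ j, 0 ≤ x t j) ∧ (∑ j, x t j) ≤ 1)
    (hopt : ∀ t, ∀ x' : Fin k → ℝ, (∀ j, 0 ≤ x' j) → (∑ j, x' j) ≤ 1 →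
      (∑ j, x' j * (c t j + ((B t).transpose.mulVec y) j)) ≤
        ∑ j, x t j * (c t j + ((B t).transpose.mulVec y) j))
    (hcs : ∀ i, y i < 0 → (∑ t, (B t).mulVec (x t)) i = 1) :
    ∀ i, -l < y i := by
  intro i
  by_contra! hyl
  have hrow := hcs i (by linarith)
  rw [Finset.sum_apply] at hrow
  obtain ⟨t, -, ht⟩ := exists_lt_of_sum_lt (s := univ) (f := 0)
    (g := fun t => (B t *ᵥ x t) i) (by simp [hrow])
  obtain ⟨j, -, hj⟩ := exists_lt_of_sum_lt (s := univ) (f := 0)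
    (g := fun j => B t i j * x t j) (by simpa [mulVec, dotProduct] using ht)
  have hBij : 0 < B t i j := (hB t i j).lt_of_ne (left_ne_zero_of_mul hj.ne').symm
  have hxj : 0 < x t j := ((hx t).1 j).lt_of_ne (right_ne_zero_of_mul hj.ne').symm
  have hprofit : c t j + ((B t)ᵀ *ᵥ y) j < 0 := by
    have := transpose_mulVec_apply_le (hB t) hy i j
    have := mul_le_mul_of_nonneg_right hyl (hB t i j)
    linarith [hlc t i j hBij]
  exact (mul_neg_of_pos_of_neg hxj hprofit).not_ge
    (mul_nonneg_of_isMaxOn_subsimplex (hx t).1 (hx t).2 (hopt t) j)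

/-- Lower bound on the optimal dual variable of the online LP:
under primal optimality (i) and complementary slackness (ii),
`yᵢ > −l` for every `i`. -/
theorem stmt_11 {m n k : ℕ} (hm : 1 ≤ m) (hn : 1 ≤ n) (hk : 1 ≤ k)
    (c : Fin m → Fin k → ℝ) (B : Fin m → Matrix (Fin n) (Fin k) ℝ)
    (hB : ∀ t i j, 0 ≤ B t i j)
    (l : ℝ) (hl : 0 < l)
    (hlc : ∀ t i j, 0 < B t i j → c t j < l * B t i j)
    (y : Fin n → ℝ) (hy : ∀ i, y i ≤ 0)
    (x : Fin m → Fin k → ℝ)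
    (hx : ∀ t, (∀ j, 0 ≤ x t j) ∧ (∑ j, x t j) ≤ 1)
    (hopt : ∀ t, ∀ x' : Fin k → ℝ, (∀ j, 0 ≤ x' j) → (∑ j, x' j) ≤ 1 →
      (∑ j, x' j * (c t j + ((B t).transpose.mulVec y) j)) ≤
        ∑ j, x t j * (c t j + ((B t).transpose.mulVec y) j))
    (hcs : ∀ i, y i < 0 → (∑ t, (B t).mulVec (x t)) i = 1) :
    ∀ i, -l < y i :=
  stmt_11_general c B hB l hl hlc y hy x hx hopt hcs
end

section
/- Fix a real number p ≥ 1 and n ≥ 1, let B_p = {v ∈ ℝⁿ : ∑_{i=1}^n |v_i|^p ≤ 1}, and define G : ℝⁿ → ℝ by G(u) = −inf{∑_i |u_i − v_i| : v ∈ B_p}. Then G is concave, and G satisfies Assumption 1 on the cone ℝ₊ⁿ: whenever u, v ∈ ℝⁿ with 0 ≤ v_i ≤ u_i for all i, there exists a supergradient y of G at u such that z − y ∈ ℝ₊ⁿ (i.e., z_i ≥ y_i for all i) for every supergradient z of G at v. -/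
/-!
Write `d = -G` for the `ℓ¹`-distance to `B_p`; it is convex, being the distance to a convex set.
For `u` interior to `B_p`, `0` is a subgradient of `d` at `u`. For `u ≥ 0` otherwise, pick the
level `τ` with `∑ min (uᵢ, τ) ^ p = 1`. The truncation `m = min (u, τ)` is a nearest point of `B_p`
to `u`, and `wᵢ = (mᵢ / τ) ^ (p - 1)` is a subgradient of `d` at `u`: `0 ≤ w ≤ 1`, `w` is an outer
normal of `B_p` at `m` (tangent-line inequality for `t ↦ t ^ p`), and `⟪w, u - m⟫ = d u`.
Conversely, a subgradient `g` of `d` at `v ≥ 0` has `gᵢ ≤ 1`, has `g ≤ 0` if `v` is interior to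
`B_p`, and is otherwise an outer normal of `B_p` at the truncation `min (v, σ)`. Trading mass along
the boundary of `B_p` between a coordinate `i` below the level `σ` and one at `σ` then gives
`gᵢ ≤ (vᵢ / σ) ^ (p - 1)`. Finally `v ≤ u` forces `τ ≤ σ`, so these bounds at `v` are dominated by
the weights at `u`.
-/

open RealInnerProductSpace

open Finset Real Filter Topology

theorem ConvexOn.add_mul_sub_le_of_hasDerivAt {S : Set ℝ} {f : ℝ → ℝ} {f' x y : ℝ}
    (hf : ConvexOn ℝ S f) (hx : x ∈ S) (hy : y ∈ S) (hd : HasDerivAt f f' x) :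
    f x + f' * (y - x) ≤ f y := by
  rcases lt_trichotomy x y with hxy | rfl | hyx
  · have := hf.le_slope_of_hasDerivAt hx hy hxy hd
    rw [slope_def_field, le_div_iff₀ (sub_pos.2 hxy)] at this
    linarith
  · simp
  · have := hf.slope_le_of_hasDerivAt hy hx hyx hd
    rw [slope_def_field, div_le_iff₀ (sub_pos.2 hyx)] at this
    linarith

theorem rpow_add_mul_sub_le_rpow {p a b : ℝ} (hp : 1 ≤ p) (ha : 0 ≤ a) (hb : 0 ≤ b) :
    a ^ p + p * a ^ (p - 1) * (b - a) ≤ b ^ p :=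
  (convexOn_rpow hp).add_mul_sub_le_of_hasDerivAt ha hb (hasDerivAt_rpow_const (Or.inr hp))

theorem sum_rpow_sub_one_mul_sub_nonpos {ι : Type*} [Fintype ι] {p : ℝ} (hp : 1 ≤ p)
    {m x : ι → ℝ} (hm : ∀ i, 0 ≤ m i) (hx : ∑ i, |x i| ^ p ≤ ∑ i, m i ^ p) :
    ∑ i, m i ^ (p - 1) * (x i - m i) ≤ 0 := by
  have tangent :
      ∑ i, m i ^ p + p * ∑ i, m i ^ (p - 1) * (|x i| - m i) ≤ ∑ i, |x i| ^ p := by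
    rw [mul_sum, ← sum_add_distrib]
    exact sum_le_sum fun i _ => by
      simpa [mul_assoc] using rpow_add_mul_sub_le_rpow hp (hm i) (abs_nonneg (x i))
  have habs : ∑ i, m i ^ (p - 1) * (x i - m i) ≤ ∑ i, m i ^ (p - 1) * (|x i| - m i) :=
    sum_le_sum fun i _ => mul_le_mul_of_nonneg_left (by linarith [le_abs_self (x i)])
      (rpow_nonneg (hm i) _)
  nlinarith

theorem abs_mul_add_mul_rpow_le {p : ℝ} (hp : 1 ≤ p) {a b : ℝ} (ha : 0 ≤ a) (hb : 0 ≤ b)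
    (hab : a + b = 1) (x y : ℝ) : |a * x + b * y| ^ p ≤ a * |x| ^ p + b * |y| ^ p := by
  calc |a * x + b * y| ^ p ≤ (a * |x| + b * |y|) ^ p := by
        refine rpow_le_rpow (abs_nonneg _) ?_ (by linarith)
        simpa [abs_mul, abs_of_nonneg ha, abs_of_nonneg hb] using abs_add_le (a * x) (b * y)
    _ ≤ a * |x| ^ p + b * |y| ^ p :=
        (convexOn_rpow hp).2 (abs_nonneg x) (abs_nonneg y) ha hb hab

/-- For `0 ≤ a < σ`, raising coordinate `a` by `t` can be compensated, inside `B_p`, by lowering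
coordinate `σ` by `t * ((a / σ) ^ (p - 1) + ε)`. -/
theorem exists_pos_rpow_add_sub_rpow_le {p a σ ε : ℝ} (hp : 1 ≤ p) (ha : 0 ≤ a) (haσ : a < σ)
    (hε : 0 < ε) :
    ∃ t > 0, t * ((a / σ) ^ (p - 1) + ε) ≤ σ ∧
      (a + t) ^ p - a ^ p ≤ σ ^ p - (σ - t * ((a / σ) ^ (p - 1) + ε)) ^ p := by
  set c := (a / σ) ^ (p - 1) + ε with hc
  have hσ : 0 < σ := ha.trans_lt haσ
  have hp1 : 0 ≤ p - 1 := by linarith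
  have hzero : 0 < (σ - 0 * c) ^ (p - 1) * c - (a + 0) ^ (p - 1) := by
    have : σ ^ (p - 1) * (a / σ) ^ (p - 1) = a ^ (p - 1) := by
      rw [div_rpow ha hσ.le, mul_div_cancel₀ _ (rpow_pos_of_pos hσ _).ne']
    have := rpow_pos_of_pos hσ (p - 1)
    simp only [add_zero, zero_mul, sub_zero, hc]
    nlinarith
  have hcont : ContinuousAt (fun t => (σ - t * c) ^ (p - 1) * c - (a + t) ^ (p - 1)) 0 := by
    refine ((ContinuousAt.rpow_const ?_ (Or.inr hp1)).mul continuousAt_const).sub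
      (ContinuousAt.rpow_const ?_ (Or.inr hp1)) <;> fun_prop
  have hsmall :
      ∀ᶠ t in 𝓝 (0 : ℝ), t * c < σ ∧ (a + t) ^ (p - 1) < (σ - t * c) ^ (p - 1) * c := by
    refine ((continuous_id.mul continuous_const).continuousAt.eventually_lt continuousAt_const
      (by simpa using hσ)).and ?_
    filter_upwards [hcont.eventually (lt_mem_nhds hzero)] with t ht
    linarith
  obtain ⟨t, ⟨hts, htlt⟩, ht0 : 0 < t⟩ :=
    ((eventually_nhdsWithin_of_eventually_nhds hsmall).and
      (self_mem_nhdsWithin : Set.Ioi (0 : ℝ) ∈ 𝓝[>] 0)).exists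
  refine ⟨t, ht0, hts.le, ?_⟩
  have hupper := rpow_add_mul_sub_le_rpow hp (by positivity : 0 ≤ a + t) ha
  have hlower := rpow_add_mul_sub_le_rpow hp (sub_nonneg.2 hts.le) hσ.le
  have hmono : p * (a + t) ^ (p - 1) * t ≤ p * (σ - t * c) ^ (p - 1) * (t * c) := by
    have := mul_le_mul_of_nonneg_left htlt.le (by positivity : 0 ≤ p * t)
    linarith
  linarith

section l1DistLpBall

variable {n : ℕ} {p : ℝ}

noncomputable def l1DistLpBall (p : ℝ) (x : EuclideanSpace ℝ (Fin n)) : ℝ :=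
  sInf {d : ℝ | ∃ v : EuclideanSpace ℝ (Fin n),
      (∑ i, |v i| ^ p) ≤ 1 ∧ d = ∑ i, |x i - v i|}

theorem l1DistLpBall_nonneg (x : EuclideanSpace ℝ (Fin n)) : 0 ≤ l1DistLpBall p x :=
  Real.sInf_nonneg <| by
    rintro _ ⟨v, -, rfl⟩
    positivity

theorem l1DistLpBall_le {x v : EuclideanSpace ℝ (Fin n)} (hv : ∑ i, |v i| ^ p ≤ 1) :
    l1DistLpBall p x ≤ ∑ i, |x i - v i| := by
  refine csInf_le ⟨0, ?_⟩ ⟨v, hv, rfl⟩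
  rintro _ ⟨w, -, rfl⟩
  positivity

theorem l1DistLpBall_eq_zero {x : EuclideanSpace ℝ (Fin n)} (hx : ∑ i, |x i| ^ p ≤ 1) :
    l1DistLpBall p x = 0 :=
  le_antisymm (by simpa using l1DistLpBall_le (x := x) hx) (l1DistLpBall_nonneg x)

theorem le_l1DistLpBall (hp : p ≠ 0) {x : EuclideanSpace ℝ (Fin n)} {c : ℝ}
    (h : ∀ v : EuclideanSpace ℝ (Fin n), ∑ i, |v i| ^ p ≤ 1 → c ≤ ∑ i, |x i - v i|) :
    c ≤ l1DistLpBall p x :=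
  le_csInf ⟨_, 0, by simp [zero_rpow hp], rfl⟩ (by rintro _ ⟨v, hv, rfl⟩; exact h v hv)

theorem exists_sum_abs_sub_lt_l1DistLpBall_add (hp : p ≠ 0) (x : EuclideanSpace ℝ (Fin n))
    {ε : ℝ} (hε : 0 < ε) :
    ∃ v : EuclideanSpace ℝ (Fin n), ∑ i, |v i| ^ p ≤ 1 ∧
      ∑ i, |x i - v i| < l1DistLpBall p x + ε := by
  obtain ⟨_, ⟨v, hv, rfl⟩, hlt⟩ :=
    exists_lt_of_csInf_lt (by exact ⟨_, 0, by simp [zero_rpow hp], rfl⟩)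
      (lt_add_of_pos_right (l1DistLpBall p x) hε)
  exact ⟨v, hv, hlt⟩

theorem l1DistLpBall_le_add (hp : p ≠ 0) (x y : EuclideanSpace ℝ (Fin n)) :
    l1DistLpBall p y ≤ l1DistLpBall p x + ∑ i, |y i - x i| := by
  rw [← sub_le_iff_le_add]
  refine le_l1DistLpBall hp fun v hv => ?_
  have htri : ∑ i, |y i - v i| ≤ ∑ i, |y i - x i| + ∑ i, |x i - v i| := by
    rw [← sum_add_distrib]
    exact sum_le_sum fun i _ => abs_sub_le _ _ _
  linarith [l1DistLpBall_le (x := y) hv]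

theorem convexOn_l1DistLpBall (hp : 1 ≤ p) :
    ConvexOn ℝ Set.univ (l1DistLpBall (n := n) p) := by
  refine ⟨convex_univ, fun x _ y _ a b ha hb hab => ?_⟩
  refine le_of_forall_pos_le_add fun ε hε => ?_
  have hp0 : p ≠ 0 := by positivity
  obtain ⟨v, hv, hxv⟩ := exists_sum_abs_sub_lt_l1DistLpBall_add hp0 x hε
  obtain ⟨w, hw, hyw⟩ := exists_sum_abs_sub_lt_l1DistLpBall_add hp0 y hε
  have hmem : ∑ i, |(a • v + b • w) i| ^ p ≤ 1 := calc
    ∑ i, |(a • v + b • w) i| ^ p ≤ ∑ i, (a * |v i| ^ p + b * |w i| ^ p) :=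
      sum_le_sum fun i _ => by simpa using abs_mul_add_mul_rpow_le hp ha hb hab (v i) (w i)
    _ = a * ∑ i, |v i| ^ p + b * ∑ i, |w i| ^ p := by rw [sum_add_distrib, mul_sum, mul_sum]
    _ ≤ 1 := by nlinarith
  have hcost : ∑ i, |(a • x + b • y) i - (a • v + b • w) i|
      ≤ a * ∑ i, |x i - v i| + b * ∑ i, |y i - w i| := by
    rw [mul_sum, mul_sum, ← sum_add_distrib]
    refine sum_le_sum fun i _ => ?_
    have : (a • x + b • y) i - (a • v + b • w) i = a * (x i - v i) + b * (y i - w i) := by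
      simp only [PiLp.add_apply, PiLp.smul_apply, smul_eq_mul]; ring
    rw [this]
    simpa [abs_mul, abs_of_nonneg ha, abs_of_nonneg hb] using
      abs_add_le (a * (x i - v i)) (b * (y i - w i))
  have := l1DistLpBall_le (x := a • x + b • y) hmem
  simp only [smul_eq_mul]
  nlinarith [mul_le_mul_of_nonneg_left hxv.le ha, mul_le_mul_of_nonneg_left hyw.le hb]

noncomputable def truncate (a : EuclideanSpace ℝ (Fin n)) (σ : ℝ) :
    EuclideanSpace ℝ (Fin n) :=
  WithLp.toLp 2 fun i => min (a i) σ

noncomputable def truncWeight (p : ℝ) (a : EuclideanSpace ℝ (Fin n)) (σ : ℝ) :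
    EuclideanSpace ℝ (Fin n) :=
  WithLp.toLp 2 fun i => (min (a i) σ / σ) ^ (p - 1)

@[simp] theorem truncate_apply (a : EuclideanSpace ℝ (Fin n)) (σ : ℝ) (i : Fin n) :
    truncate a σ i = min (a i) σ := rfl

@[simp] theorem truncWeight_apply (a : EuclideanSpace ℝ (Fin n)) (σ : ℝ) (i : Fin n) :
    truncWeight p a σ i = (min (a i) σ / σ) ^ (p - 1) := rfl

/-- `truncate a σ` lies on the boundary of `B_p` and is an `ℓ¹`-nearest point of `B_p` to `a`.
`exists_le` excludes the levels above `max a`, which also satisfy `sum_rpow` when `a` itself lies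
on the boundary. -/
structure IsTruncationLevel (p : ℝ) (a : EuclideanSpace ℝ (Fin n)) (σ : ℝ) : Prop where
  pos : 0 < σ
  exists_le : ∃ k, σ ≤ a k
  sum_rpow : ∑ i, truncate a σ i ^ p = 1

theorem exists_isTruncationLevel (hp : 0 < p) {a : EuclideanSpace ℝ (Fin n)}
    (ha : ∀ i, 0 ≤ a i) (h : 1 ≤ ∑ i, |a i| ^ p) : ∃ σ, IsTruncationLevel p a σ := by
  obtain ⟨j, -, -⟩ := exists_ne_zero_of_sum_ne_zero (by linarith : ∑ i, |a i| ^ p ≠ 0)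
  have hne : (univ : Finset (Fin n)).Nonempty := ⟨j, mem_univ j⟩
  obtain ⟨k, -, hk⟩ := exists_mem_eq_sup' hne a
  have hmax : ∀ i, a i ≤ a k := fun i => hk ▸ le_sup' a (mem_univ i)
  have hcont : ContinuousOn (fun s => ∑ i, min (a i) s ^ p) (Set.Icc 0 (a k)) :=
    (continuous_finsetSum _ fun i _ =>
      (continuous_const.min continuous_id).rpow_const fun _ => Or.inr hp.le).continuousOn
  have hmem : (1 : ℝ) ∈ Set.Icc (∑ i, min (a i) 0 ^ p) (∑ i, min (a i) (a k) ^ p) := by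
    refine ⟨by simp [min_eq_right (ha _), zero_rpow hp.ne'], ?_⟩
    simpa [min_eq_left (hmax _), abs_of_nonneg (ha _)] using h
  obtain ⟨σ, ⟨hσ0, hσk⟩, hσ⟩ := intermediate_value_Icc (ha k) hcont hmem
  refine ⟨σ, hσ0.lt_of_ne ?_, ⟨k, hσk⟩, hσ⟩
  rintro rfl
  simp [min_eq_right (ha _), zero_rpow hp.ne'] at hσ

theorem IsTruncationLevel.sum_abs_rpow {a : EuclideanSpace ℝ (Fin n)} {σ : ℝ}
    (ha : ∀ i, 0 ≤ a i) (hσ : IsTruncationLevel p a σ) : ∑ i, |truncate a σ i| ^ p = 1 := by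
  simpa [abs_of_nonneg (le_min (ha _) hσ.pos.le)] using hσ.sum_rpow

theorem IsTruncationLevel.le_of_le (hp : 0 < p) {u v : EuclideanSpace ℝ (Fin n)} {σ τ : ℝ}
    (hv0 : ∀ i, 0 ≤ v i) (hvu : ∀ i, v i ≤ u i) (hσ : IsTruncationLevel p v σ)
    (hτ : IsTruncationLevel p u τ) : τ ≤ σ := by
  by_contra! hστ
  obtain ⟨k, hk⟩ := hτ.exists_le
  have hlt : ∑ i, truncate u σ i ^ p < ∑ i, truncate u τ i ^ p := by
    refine sum_lt_sum (fun i _ => ?_) ⟨k, mem_univ k, ?_⟩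
    · exact rpow_le_rpow (le_min ((hv0 i).trans (hvu i)) hσ.pos.le)
        (min_le_min_left _ hστ.le) hp.le
    · simpa [min_eq_right hk, min_eq_right (hστ.le.trans hk)] using
        rpow_lt_rpow hσ.pos.le hστ hp
  have hle : ∑ i, truncate v σ i ^ p ≤ ∑ i, truncate u σ i ^ p :=
    sum_le_sum fun i _ => rpow_le_rpow (le_min (hv0 i) hσ.pos.le)
      (min_le_min_right _ (hvu i)) hp.le
  linarith [hσ.sum_rpow, hτ.sum_rpow]

section truncWeight

variable {a : EuclideanSpace ℝ (Fin n)} {σ : ℝ}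

theorem truncWeight_nonneg (hσ : 0 < σ) {i : Fin n} (ha : 0 ≤ a i) :
    0 ≤ truncWeight p a σ i :=
  rpow_nonneg (div_nonneg (le_min ha hσ.le) hσ.le) _

theorem truncWeight_le_one (hp : 1 ≤ p) (hσ : 0 < σ) {i : Fin n} (ha : 0 ≤ a i) :
    truncWeight p a σ i ≤ 1 :=
  rpow_le_one (div_nonneg (le_min ha hσ.le) hσ.le) (div_le_one_of_le₀ (min_le_right _ _) hσ.le)
    (by linarith)

theorem truncWeight_le_of_le (hp : 1 ≤ p) {u v : EuclideanSpace ℝ (Fin n)} {σ τ : ℝ}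
    (hτ : 0 < τ) (hτσ : τ ≤ σ) {i : Fin n} (hv : 0 ≤ v i) (hvu : v i ≤ u i) :
    truncWeight p v σ i ≤ truncWeight p u τ i := by
  have hσ : 0 < σ := hτ.trans_le hτσ
  refine rpow_le_rpow (div_nonneg (le_min hv hσ.le) hσ.le) ?_ (by linarith)
  rcases le_total τ (u i) with hu | hu
  · rw [min_eq_right hu, div_self hτ.ne']
    exact div_le_one_of_le₀ (min_le_right _ _) hσ.le
  · rw [min_eq_left hu]
    exact (div_le_div_of_nonneg_right (min_le_left _ _) hσ.le).trans
      (div_le_div₀ (hv.trans hvu) hvu hτ hτσ)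

theorem truncWeight_mul_sub_truncate (hσ : 0 < σ) (i : Fin n) :
    truncWeight p a σ i * (a i - truncate a σ i) = |a i - truncate a σ i| := by
  rcases le_total (a i) σ with h | h
  · simp [min_eq_left h]
  · simp [min_eq_right h, div_self hσ.ne', abs_of_nonneg (sub_nonneg.2 h)]

theorem sum_truncWeight_mul_sub_le (hp : 1 ≤ p) (ha : ∀ i, 0 ≤ a i)
    (hσ : IsTruncationLevel p a σ) (x : EuclideanSpace ℝ (Fin n)) :
    ∑ i, truncWeight p a σ i * (x i - truncate a σ i) ≤ l1DistLpBall p x := by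
  refine le_l1DistLpBall (by positivity) fun v hv => ?_
  have hm : ∀ i, 0 ≤ truncate a σ i := fun i => le_min (ha i) hσ.pos.le
  have hnormal : ∑ i, truncWeight p a σ i * (v i - truncate a σ i) ≤ 0 := by
    have hσp := rpow_pos_of_pos hσ.pos (p - 1)
    simp_rw [truncWeight_apply, ← truncate_apply, div_rpow (hm _) hσ.pos.le,
      div_mul_eq_mul_div, ← sum_div]
    exact div_nonpos_of_nonpos_of_nonneg (sum_rpow_sub_one_mul_sub_nonpos hp hm
      (by rw [hσ.sum_rpow]; exact hv)) hσp.le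
  have hdist : ∑ i, truncWeight p a σ i * (x i - v i) ≤ ∑ i, |x i - v i| :=
    sum_le_sum fun i _ => (le_abs_self _).trans <| by
      rw [abs_mul, abs_of_nonneg (truncWeight_nonneg hσ.pos (ha i))]
      exact mul_le_of_le_one_left (abs_nonneg _) (truncWeight_le_one hp hσ.pos (ha i))
  have hsplit : ∑ i, truncWeight p a σ i * (x i - truncate a σ i)
      = ∑ i, truncWeight p a σ i * (x i - v i)
        + ∑ i, truncWeight p a σ i * (v i - truncate a σ i) := by
    rw [← sum_add_distrib]; congr 1; ext i; ring
  linarith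

theorem l1DistLpBall_eq_sum_abs_sub_truncate (hp : 1 ≤ p) (ha : ∀ i, 0 ≤ a i)
    (hσ : IsTruncationLevel p a σ) :
    l1DistLpBall p a = ∑ i, |a i - truncate a σ i| := by
  refine le_antisymm (l1DistLpBall_le (hσ.sum_abs_rpow ha).le) ?_
  simpa only [truncWeight_mul_sub_truncate hσ.pos] using sum_truncWeight_mul_sub_le hp ha hσ a

theorem isSupergradient_neg_truncWeight (hp : 1 ≤ p) (ha : ∀ i, 0 ≤ a i)
    (hσ : IsTruncationLevel p a σ) :
    IsSupergradient (fun x => -l1DistLpBall p x) a (-truncWeight p a σ) := by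
  intro x
  have hx := sum_truncWeight_mul_sub_le hp ha hσ x
  have ha' : l1DistLpBall p a = ∑ i, truncWeight p a σ i * (a i - truncate a σ i) := by
    simp only [truncWeight_mul_sub_truncate hσ.pos,
      l1DistLpBall_eq_sum_abs_sub_truncate hp ha hσ]
  have hinner : ⟪-truncWeight p a σ, x - a⟫ = -∑ i, truncWeight p a σ i * (x i - a i) := by
    simp [PiLp.inner_apply, mul_comm]
  have hsplit : ∑ i, truncWeight p a σ i * (x i - truncate a σ i)
      = ∑ i, truncWeight p a σ i * (a i - truncate a σ i)
        + ∑ i, truncWeight p a σ i * (x i - a i) := by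
    rw [← sum_add_distrib]; congr 1; ext i; ring
  linarith

end truncWeight

theorem IsSupergradient.apply_add_single_le {ψ : EuclideanSpace ℝ (Fin n) → ℝ}
    {u y : EuclideanSpace ℝ (Fin n)} (h : IsSupergradient ψ u y) (i : Fin n) (t : ℝ) :
    ψ (u + EuclideanSpace.single i t) ≤ ψ u + t * y i := by
  simpa [EuclideanSpace.inner_single_right] using h (u + EuclideanSpace.single i t)

theorem sum_add_single_sub_single {i k : Fin n} (hik : i ≠ k) (g : ℝ → ℝ)
    (x : EuclideanSpace ℝ (Fin n)) (t s : ℝ) :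
    ∑ j, g ((x + EuclideanSpace.single i t - EuclideanSpace.single k s) j)
      = ∑ j, g (x j) + (g (x i + t) - g (x i)) + (g (x k - s) - g (x k)) := by
  have hcoord : ∀ j, g ((x + EuclideanSpace.single i t - EuclideanSpace.single k s) j)
      = g (x j) + (if j = i then g (x i + t) - g (x i) else 0)
        + (if j = k then g (x k - s) - g (x k) else 0) := by
    intro j
    by_cases hji : j = i
    · subst hji; simp [hik]
    · by_cases hjk : j = k
      · subst hjk; simp [hji]
      · simp [hji, hjk]
  simp_rw [hcoord, sum_add_distrib, sum_ite_eq', mem_univ, if_true]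

section isSupergradient

variable {v z : EuclideanSpace ℝ (Fin n)}

theorem neg_one_le_of_isSupergradient (hp : p ≠ 0)
    (hz : IsSupergradient (fun x => -l1DistLpBall p x) v z) (i : Fin n) : -1 ≤ z i := by
  have hsup := hz.apply_add_single_le i 1
  have hlip := l1DistLpBall_le_add hp v (v + EuclideanSpace.single i 1)
  have hstep : ∑ j, |(v + EuclideanSpace.single i (1 : ℝ)) j - v j| = 1 := by
    simp only [PiLp.add_apply, add_sub_cancel_left]
    simp [PiLp.single_apply, apply_ite]
  linarith

theorem nonneg_of_isSupergradient (hp : 0 < p) (hv : ∑ j, |v j| ^ p < 1)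
    (hz : IsSupergradient (fun x => -l1DistLpBall p x) v z) (i : Fin n) : 0 ≤ z i := by
  have hcont : Continuous fun t : ℝ => ∑ j, |(v + EuclideanSpace.single i t) j| ^ p := by
    refine continuous_finsetSum _ fun j _ => ?_
    simp only [PiLp.add_apply, PiLp.single_apply]
    split_ifs <;> fun_prop (disch := exact hp.le)
  obtain ⟨t, hmem, ht : 0 < t⟩ :=
    ((eventually_nhdsWithin_of_eventually_nhds
      (hcont.continuousAt.eventually (gt_mem_nhds (by simpa using hv)))).and
      (self_mem_nhdsWithin : Set.Ioi (0 : ℝ) ∈ 𝓝[>] 0)).exists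
  have hsup := hz.apply_add_single_le i t
  rw [l1DistLpBall_eq_zero hmem.le, l1DistLpBall_eq_zero hv.le] at hsup
  nlinarith

theorem inner_sub_nonneg_of_isSupergradient {m y : EuclideanSpace ℝ (Fin n)}
    (hm : l1DistLpBall p v = ∑ j, |v j - m j|) (hy : ∑ j, |y j| ^ p ≤ 1)
    (hz : IsSupergradient (fun x => -l1DistLpBall p x) v z) : 0 ≤ ⟪z, y - m⟫ := by
  -- `y + (v - m)` is within `l1DistLpBall p v` of the point `y` of `B_p`.
  have hsup := hz (y + (v - m))
  have hdist := l1DistLpBall_le (x := y + (v - m)) hy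
  simp only [PiLp.add_apply, PiLp.sub_apply, add_sub_cancel_left, ← hm] at hdist
  rw [show y + (v - m) - v = y - m by abel] at hsup
  linarith

theorem neg_truncWeight_le_of_isSupergradient (hp : 1 ≤ p) {σ : ℝ} (hv0 : ∀ j, 0 ≤ v j)
    (hσ : IsTruncationLevel p v σ) (hz : IsSupergradient (fun x => -l1DistLpBall p x) v z)
    (i : Fin n) : -truncWeight p v σ i ≤ z i := by
  have hp0 : p ≠ 0 := by positivity
  rcases le_or_gt σ (v i) with hi | hi
  · rw [truncWeight_apply, min_eq_right hi, div_self hσ.pos.ne', one_rpow]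
    exact neg_one_le_of_isSupergradient hp0 hz i
  obtain ⟨k, hk⟩ := hσ.exists_le
  have hik : i ≠ k := by rintro rfl; linarith
  rw [truncWeight_apply, min_eq_left hi.le]
  refine le_of_forall_pos_le_add fun ε hε => ?_
  obtain ⟨t, ht, hs, hbudget⟩ := exists_pos_rpow_add_sub_rpow_le hp (hv0 i) hi hε
  set s := t * ((v i / σ) ^ (p - 1) + ε)
  -- `y` moves mass along the boundary of `B_p`, from coordinate `k` (at the level) to `i`.
  set y := truncate v σ + EuclideanSpace.single i t - EuclideanSpace.single k s
  have hy : ∑ j, |y j| ^ p ≤ 1 := by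
    have := hσ.sum_abs_rpow hv0
    rw [sum_add_single_sub_single hik (fun r => |r| ^ p)]
    simp only [truncate_apply, min_eq_left hi.le, min_eq_right hk] at this ⊢
    rw [abs_of_nonneg (hv0 i), abs_of_nonneg (by linarith [hv0 i] : 0 ≤ v i + t),
      abs_of_nonneg (sub_nonneg.2 hs), abs_of_nonneg hσ.pos.le]
    linarith
  have hnormal := inner_sub_nonneg_of_isSupergradient
    (l1DistLpBall_eq_sum_abs_sub_truncate hp hv0 hσ) hy hz
  rw [show y - truncate v σ = EuclideanSpace.single i t - EuclideanSpace.single k s by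
      simp only [y]; abel, inner_sub_right, EuclideanSpace.inner_single_right,
    EuclideanSpace.inner_single_right] at hnormal
  have hzk := neg_one_le_of_isSupergradient hp0 hz k
  simp only [conj_trivial] at hnormal
  have hs0 : 0 ≤ s :=
    mul_nonneg ht.le (add_nonneg (rpow_nonneg (div_nonneg (hv0 i) hσ.pos.le) _) hε.le)
  have hmul : t * -((v i / σ) ^ (p - 1) + ε) ≤ t * z i := by
    nlinarith [mul_le_mul_of_nonneg_left hzk hs0]
  linarith [le_of_mul_le_mul_left hmul ht]

end isSupergradient

end l1DistLpBall

theorem stmt_12_general {n : ℕ} (p : ℝ) (hp : 1 ≤ p)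
    (G : EuclideanSpace ℝ (Fin n) → ℝ)
    (hG : ∀ u, G u = -sInf {d : ℝ | ∃ v : EuclideanSpace ℝ (Fin n),
        (∑ i, |v i| ^ p) ≤ 1 ∧ d = ∑ i, |u i - v i|}) :
    ConcaveOn ℝ Set.univ G ∧
    ∀ u v : EuclideanSpace ℝ (Fin n), (∀ i, 0 ≤ v i) → (∀ i, v i ≤ u i) →
      ∃ y, IsSupergradient G u y ∧
        ∀ z, IsSupergradient G v z → ∀ i, y i ≤ z i := by
  obtain rfl : G = fun x => -l1DistLpBall p x := funext hG
  have hp0 : 0 < p := by positivity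
  refine ⟨(convexOn_l1DistLpBall hp).neg, fun u v hv0 hvu => ?_⟩
  have hu0 : ∀ i, 0 ≤ u i := fun i => (hv0 i).trans (hvu i)
  have hvu_sum : ∑ i, |v i| ^ p ≤ ∑ i, |u i| ^ p := sum_le_sum fun i _ =>
    rpow_le_rpow (abs_nonneg _) (by simpa [abs_of_nonneg, hv0 i, hu0 i] using hvu i) hp0.le
  by_cases hu : ∑ i, |u i| ^ p < 1
  · refine ⟨0, fun x => ?_, fun z hz i =>
      nonneg_of_isSupergradient hp0 (hvu_sum.trans_lt hu) hz i⟩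
    simpa [l1DistLpBall_eq_zero hu.le] using l1DistLpBall_nonneg x
  obtain ⟨τ, hτ⟩ := exists_isTruncationLevel hp0 hu0 (not_lt.1 hu)
  refine ⟨-truncWeight p u τ, isSupergradient_neg_truncWeight hp hu0 hτ, fun z hz i => ?_⟩
  by_cases hv : ∑ i, |v i| ^ p < 1
  · exact (neg_nonpos.2 (truncWeight_nonneg hτ.pos (hu0 i))).trans
      (nonneg_of_isSupergradient hp0 hv hz i)
  obtain ⟨σ, hσ⟩ := exists_isTruncationLevel hp0 hv0 (not_lt.1 hv)
  calc -truncWeight p u τ i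
      ≤ -truncWeight p v σ i :=
        neg_le_neg (truncWeight_le_of_le hp hτ.pos (hσ.le_of_le hp0 hv0 hvu hτ) (hv0 i) (hvu i))
    _ ≤ z i := neg_truncWeight_le_of_isSupergradient hp hv0 hσ hz i

/-- `G(u) = −d₁(u, B_p)` is concave and satisfies Assumption 1 on the
nonnegative orthant (whose dual cone is itself). -/
theorem stmt_12 {n : ℕ} (hn : 1 ≤ n) (p : ℝ) (hp : 1 ≤ p)
    (G : EuclideanSpace ℝ (Fin n) → ℝ)
    (hG : ∀ u, G u = -sInf {d : ℝ | ∃ v : EuclideanSpace ℝ (Fin n),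
        (∑ i, |v i| ^ p) ≤ 1 ∧ d = ∑ i, |u i - v i|}) :
    ConcaveOn ℝ Set.univ G ∧
    ∀ u v : EuclideanSpace ℝ (Fin n), (∀ i, 0 ≤ v i) → (∀ i, v i ≤ u i) →
      ∃ y, IsSupergradient G u y ∧
        ∀ z, IsSupergradient G v z → ∀ i, y i ≤ z i :=
  stmt_12_general p hp G hG
end

section
/- (Lemma 2: monotone rearrangement preserves feasibility.) Let ψ : ℝ → ℝ be concave, nondecreasing, with ψ(0) = 0 and ψ(u) > 0 for all u > 0. Let y : ℝ → ℝ be continuous on [0, ∞) and β ∈ ℝ, and suppose the feasibility constraint holds: for all u ≥ 0 and all s ≥ 0, ∫₀ᵘ y(t) dt ≤ β·ψ(u) + y(u)·s − ψ(s) (equivalently, ∫₀ᵘ y − ψ*(y(u)) ≤ β·ψ(u), where ψ*(r) = inf_{s ≥ 0} (r·s − ψ(s))). Define ȳ(u) = min{y(s) : 0 ≤ s ≤ u}. Then ȳ is continuous on [0, ∞) and (ȳ, β) is also feasible: for all u ≥ 0 and all s ≥ 0, ∫₀ᵘ ȳ(t) dt ≤ β·ψ(u) + ȳ(u)·s − ψ(s).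 -/
/-!
Let `m = ȳ(u)` be attained at `a ≤ u`. Since `ȳ ≤ y` on `[0, a]` and `ȳ ≤ m` on `[a, u]`, it
suffices to show `∫₀ᵃ y + m (u - a) ≤ β ψ(u) + m s - ψ(s)`. Feasibility of `y` at `a` gives this
with `u` replaced by `a`, and the defect `f(t) = β ψ(t) - m t` is concave (`β ≥ 0` follows from
feasibility at `s = 0`). If the inequality failed at `u`, concavity would make it fail by at least
a fixed `δ > 0` at every `t ≥ u`. Then `H(t) = ∫ₐᵗ (y - m) + δ` satisfies `H ≤ s H'` on `[u, ∞)`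
with `H(u) > 0`, so `H` grows exponentially by Grönwall, whereas feasibility at `s = 0` keeps
`H` bounded above.
-/

open Set Real Filter MeasureTheory intervalIntegral

/-- With `ψ*(r) = inf_{s ≥ 0} (r s - ψ s)` unfolded, this is `∫₀ᵘ y - ψ*(y u) ≤ β ψ u`. -/
def Feasible (ψ y : ℝ → ℝ) (β : ℝ) : Prop :=
  ∀ u ≥ (0:ℝ), ∀ s ≥ (0:ℝ), (∫ t in (0:ℝ)..u, y t) ≤ β * ψ u + y u * s - ψ s

noncomputable def runningMin (y : ℝ → ℝ) (u : ℝ) : ℝ :=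
  sInf (y '' Icc 0 u)

theorem nonneg_of_forall_le_add_mul {a b c : ℝ} (h : ∀ s ≥ (0:ℝ), a ≤ b + c * s) : 0 ≤ c := by
  by_contra! hc
  have hs := h (-(|b - a| + 1) / c) (div_nonneg_of_nonpos (neg_nonpos.2 (by positivity)) hc.le)
  rw [mul_div_cancel₀ _ hc.ne] at hs
  linarith [le_abs_self (b - a)]

theorem mul_exp_le_of_le_mul_deriv {H H' : ℝ → ℝ} {u s : ℝ} (hs : 0 < s)
    (hH : ∀ t ≥ u, HasDerivAt H (H' t) t) (hle : ∀ t ≥ u, H t ≤ s * H' t) {t : ℝ}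
    (ht : u ≤ t) : H u * exp ((t - u) / s) ≤ H t := by
  have hbound := le_gronwallBound_of_liminf_deriv_right_le (f := fun x => -H x)
    (f' := fun x => -H' x) (δ := -H u) (K := s⁻¹) (ε := 0) (b := t)
    (fun x hx => (hH x hx.1).continuousAt.continuousWithinAt.neg)
    (fun x hx _ hr => (hH x hx.1).neg.hasDerivWithinAt.liminf_right_slope_le hr) le_rfl
    (fun x hx => by
      have : s⁻¹ * H x ≤ H' x := by rw [inv_mul_le_iff₀ hs]; exact hle x hx.1
      linarith)
    t ⟨ht, le_rfl⟩
  rw [gronwallBound_ε0, ← div_eq_inv_mul] at hbound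
  linarith

theorem tendsto_atTop_of_le_mul_deriv {H H' : ℝ → ℝ} {u s : ℝ} (hs : 0 ≤ s) (hu : 0 < H u)
    (hH : ∀ t ≥ u, HasDerivAt H (H' t) t) (hle : ∀ t ≥ u, H t ≤ s * H' t) :
    Tendsto H atTop atTop := by
  rcases hs.eq_or_lt with rfl | hs
  · linarith [hle u le_rfl]
  refine tendsto_atTop_mono' atTop
    ((eventually_ge_atTop u).mono fun t ht => mul_exp_le_of_le_mul_deriv hs hH hle ht) ?_
  exact (tendsto_exp_atTop.comp ((tendsto_atTop_add_const_right _ (-u) tendsto_id).atTop_div_const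
    hs)).const_mul_atTop hu

theorem continuousOn_runningMin {y : ℝ → ℝ} (hy : Continuous y) :
    ContinuousOn (runningMin y) (Ici 0) := by
  -- Reparametrize `[0, u]` as `[0, 1] * u` so the minimum runs over a fixed compact set.
  have hc : Continuous fun u => sInf ((fun r => y (r * u)) '' Icc (0:ℝ) 1) :=
    isCompact_Icc.continuous_sInf (by fun_prop)
  refine hc.continuousOn.congr fun u (hu : 0 ≤ u) => ?_
  beta_reduce
  rw [runningMin, ← image_image y (fun r => r * u), image_mul_right_Icc zero_le_one hu, zero_mul,
    one_mul]

namespace Feasible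

variable {ψ y : ℝ → ℝ} {β : ℝ}

theorem nonneg (hψ : ∀ s ≥ (0:ℝ), 0 ≤ ψ s) (hfeas : Feasible ψ y β) {t : ℝ} (ht : 0 ≤ t) :
    0 ≤ y t :=
  nonneg_of_forall_le_add_mul (a := ∫ x in (0:ℝ)..t, y x) (b := β * ψ t) fun s hs => by
    linarith [hfeas t ht s hs, hψ s hs]

theorem beta_nonneg (hψ : ∀ s ≥ (0:ℝ), 0 ≤ ψ s) (h0 : ψ 0 = 0) (hψ1 : 0 < ψ 1)
    (hfeas : Feasible ψ y β) : 0 ≤ β := by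
  have hint : 0 ≤ ∫ x in (0:ℝ)..1, y x :=
    integral_nonneg zero_le_one fun t ht => hfeas.nonneg hψ ht.1
  have h1 := hfeas 1 zero_le_one 0 le_rfl
  rw [h0, mul_zero, add_zero, sub_zero] at h1
  exact nonneg_of_mul_nonneg_left (hint.trans h1) hψ1

theorem integral_add_mul_le (hconc : ConcaveOn ℝ univ ψ) (hβ : 0 ≤ β) (hy : Continuous y)
    (hfeas : Feasible ψ y β) {a u s : ℝ} (ha : 0 ≤ a) (hau : a ≤ u) (hs : 0 ≤ s)
    (hmin : ∀ t ∈ Icc a u, y a ≤ y t) :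
    (∫ t in (0:ℝ)..a, y t) + y a * (u - a) ≤ β * ψ u + y a * s - ψ s := by
  set m := y a
  set I : ℝ → ℝ := fun t => ∫ x in (0:ℝ)..t, y x with hI
  by_contra! hlt
  have hf : ConcaveOn ℝ univ fun t => β * ψ t - m * t :=
    (hconc.smul hβ).sub ((LinearMap.mul ℝ ℝ m).convexOn convex_univ)
  have hfa := hfeas a ha s hs
  have hau : a < u := hau.lt_of_ne (by rintro rfl; linarith)
  have hfall : ∀ t ≥ u, β * ψ t - m * t ≤ β * ψ u - m * u := fun t ht =>
    hf.right_le_of_le_left'' trivial trivial hau ht (by linarith)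
  set δ := I a - m * a + ψ s - m * s - (β * ψ u - m * u) with hδ
  have hδpos : 0 < δ := by linarith
  set H : ℝ → ℝ := fun t => I t - m * t - (I a - m * a) + δ with hH
  have hHderiv : ∀ t, HasDerivAt H (y t - m) t := fun t =>
    ((((hy.integral_hasStrictDerivAt 0 t).hasDerivAt.sub
      ((hasDerivAt_id t).const_mul m)).sub_const _).add_const δ).congr_deriv (by ring)
  have hHu : 0 < H u := by
    have hmono : (u - a) * m ≤ ∫ x in a..u, y x := by
      simpa using integral_mono_on hau.le (intervalIntegrable_const (μ := volume))
        (hy.intervalIntegrable a u) fun t ht => hmin t ht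
    have hadd := integral_add_adjacent_intervals (hy.intervalIntegrable (μ := volume) 0 a)
      (hy.intervalIntegrable a u)
    simp only [hH, hI]
    linarith
  have hHle : ∀ t ≥ u, H t ≤ s * (y t - m) := fun t ht => by
    have := hfeas t (ha.trans (hau.le.trans ht)) s hs
    linarith [hfall t ht]
  have hHbdd : ∀ t ≥ u, H t ≤ ψ s - m * s - ψ 0 := fun t ht => by
    have := hfeas t (ha.trans (hau.le.trans ht)) 0 le_rfl
    linarith [hfall t ht]
  obtain ⟨t, hbig, ht⟩ := (((tendsto_atTop_of_le_mul_deriv hs hHu (fun t _ => hHderiv t)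
    hHle).eventually_gt_atTop (ψ s - m * s - ψ 0)).and (eventually_ge_atTop u)).exists
  linarith [hHbdd t ht]

theorem to_runningMin (hconc : ConcaveOn ℝ univ ψ) (hβ : 0 ≤ β) (hy : Continuous y)
    (hfeas : Feasible ψ y β) : Feasible ψ (runningMin y) β := by
  intro u hu s hs
  obtain ⟨a, ha, hmin, hle⟩ :=
    isCompact_Icc.exists_sInf_image_eq_and_le (nonempty_Icc.2 hu) hy.continuousOn
  have hcont := continuousOn_runningMin hy
  have hint₁ : IntervalIntegrable (runningMin y) volume 0 a :=
    (hcont.mono fun t ht => ht.1).intervalIntegrable_of_Icc ha.1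
  have hint₂ : IntervalIntegrable (runningMin y) volume a u :=
    (hcont.mono fun t ht => ha.1.trans ht.1).intervalIntegrable_of_Icc ha.2
  have h₁ : (∫ t in (0:ℝ)..a, runningMin y t) ≤ ∫ t in (0:ℝ)..a, y t :=
    integral_mono_on ha.1 hint₁ (hy.intervalIntegrable 0 a) fun t ht =>
      hy.continuousOn.sInf_image_Icc_le ⟨ht.1, le_rfl⟩
  have h₂ : (∫ t in a..u, runningMin y t) ≤ y a * (u - a) := by
    simpa [mul_comm] using integral_mono_on ha.2 hint₂ (intervalIntegrable_const (μ := volume))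
      fun t ht => hy.continuousOn.sInf_image_Icc_le ⟨ha.1, ht.1⟩
  have hflat := hfeas.integral_add_mul_le hconc hβ hy ha.1 ha.2 hs
    fun t ht => hle t ⟨ha.1.trans ht.1, ht.2⟩
  rw [← integral_add_adjacent_intervals hint₁ hint₂, show runningMin y u = y a from hmin]
  linarith

end Feasible

/-- Lemma 2: if `(y, β)` is feasible for the smoothing-design problem, then
so is `(ȳ, β)` where `ȳ(u) = min_{0 ≤ s ≤ u} y(s)`; moreover `ȳ` is
continuous on `[0, ∞)`. -/
theorem stmt_13 (ψ : ℝ → ℝ) (hconc : ConcaveOn ℝ Set.univ ψ)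
    (hmono : Monotone ψ) (h0 : ψ 0 = 0) (hpos : ∀ u > (0:ℝ), 0 < ψ u)
    (y : ℝ → ℝ) (hy : ContinuousOn y (Set.Ici 0)) (β : ℝ)
    (hfeas : ∀ u ≥ (0:ℝ), ∀ s ≥ (0:ℝ),
      (∫ t in (0:ℝ)..u, y t) ≤ β * ψ u + y u * s - ψ s)
    (ybar : ℝ → ℝ)
    (hybar : ∀ u, ybar u = sInf (y '' Set.Icc 0 u)) :
    ContinuousOn ybar (Set.Ici 0) ∧
    ∀ u ≥ (0:ℝ), ∀ s ≥ (0:ℝ),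
      (∫ t in (0:ℝ)..u, ybar t) ≤ β * ψ u + ybar u * s - ψ s := by
  have hβ : 0 ≤ β :=
    Feasible.beta_nonneg (fun s hs => h0 ▸ hmono hs) h0 (hpos 1 one_pos) hfeas
  -- A continuous extension of `y` to `ℝ`; only its values on `[0, ∞)` enter the statement.
  set z : ℝ → ℝ := fun t => y (max t 0)
  have hz : Continuous z := hy.comp_continuous (by fun_prop) fun t => le_max_right t 0
  have hzy : EqOn z y (Ici 0) := fun t (ht : 0 ≤ t) => by simp [z, ht]
  have hzfeas : Feasible ψ z β := fun u hu s hs => by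
    rw [hzy hu, integral_congr fun t ht => hzy (uIcc_of_le hu ▸ ht).1]
    exact hfeas u hu s hs
  obtain rfl : ybar = runningMin z :=
    funext fun u => (hybar u).trans (congrArg sInf (image_congr fun t ht => (hzy ht.1).symm))
  exact ⟨continuousOn_runningMin hz, hzfeas.to_runningMin hconc hβ hz⟩
end

section
/- (Theorem 2: reduction to a finite horizon for plateaued ψ.) Let ψ : ℝ → ℝ be concave, nondecreasing, with ψ(0) = 0 and ψ(u) > 0 for u > 0, and suppose there is u' > 0 such that ψ(u) = ψ(u') for all u ≥ u'. Define S₁ = {β ∈ ℝ : there exists y : ℝ → ℝ continuous on [0, ∞) such that for all u ≥ 0 and all s ≥ 0, ∫₀ᵘ y(t) dt ≤ β·ψ(u) + y(u)·s − ψ(s)} and S₂ = {β ∈ ℝ : there exists y : ℝ → ℝ continuous on [0, u'] with y(u') = 0 such that for all u ∈ [0, u'] and all s ≥ 0, ∫₀ᵘ y(t) dt ≤ β·ψ(u) + y(u)·s − ψ(s)}. Then inf S₁ = inf S₂. -/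
/-!
Extending a finite-horizon solution by its value `y u' = 0` beyond `u'` keeps it feasible,
because `ψ` is constant there; hence `S₂ ⊆ S₁`. Conversely, an infinite-horizon solution `y`
is nonnegative (let `s → ∞`), and its integral over `[0, v]` stays below `β ψ(u')`, so `y` takes
arbitrarily small values beyond `u'`; evaluating the constraint there gives the terminal bound
`∫₀^{u'} y ≤ β ψ(u') - ψ(s)` for all `s ≥ 0`. Multiplying `y` by a cutoff falling linearly from
`1` to `0` on `[u' - η, u']` then gives a finite-horizon solution for `β + ε`: away from `u'` it
is `y`, and near `u'` the terminal bound suffices, since by continuity of the concave `ψ`,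
`β ψ(u') < (β + ε) ψ(u)` for `u` close to `u'`.
-/

open Set Filter Topology MeasureTheory

def infiniteHorizonFeasible (ψ : ℝ → ℝ) : Set ℝ :=
  {β : ℝ | ∃ y : ℝ → ℝ, ContinuousOn y (Ici 0) ∧
    ∀ u ≥ (0:ℝ), ∀ s ≥ (0:ℝ), (∫ t in (0:ℝ)..u, y t) ≤ β * ψ u + y u * s - ψ s}

def finiteHorizonFeasible (ψ : ℝ → ℝ) (u' : ℝ) : Set ℝ :=
  {β : ℝ | ∃ y : ℝ → ℝ, ContinuousOn y (Icc 0 u') ∧ y u' = 0 ∧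
    ∀ u ∈ Icc (0:ℝ) u', ∀ s ≥ (0:ℝ), (∫ t in (0:ℝ)..u, y t) ≤ β * ψ u + y u * s - ψ s}

theorem Real.sInf_eq_of_subset_of_forall_add_mem {A B : Set ℝ} (hAB : A ⊆ B)
    (hBA : ∀ b ∈ B, ∀ ε > 0, b + ε ∈ A) : sInf A = sInf B := by
  by_cases hB : BddBelow B
  · rcases B.eq_empty_or_nonempty with rfl | ⟨b, hb⟩
    · rw [subset_empty_iff.1 hAB]
    · refine le_antisymm ?_ (csInf_le_csInf hB ⟨b + 1, hBA b hb 1 one_pos⟩ hAB)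
      refine le_csInf ⟨b, hb⟩ fun c hc => le_of_forall_pos_le_add fun ε hε => ?_
      exact csInf_le (hB.mono hAB) (hBA c hc ε hε)
  · have hA : ¬BddBelow A := fun ⟨m, hm⟩ =>
      hB ⟨m - 1, fun b hb => by linarith [hm (hBA b hb 1 one_pos)]⟩
    rw [Real.sInf_of_not_bddBelow hA, Real.sInf_of_not_bddBelow hB]

theorem nonneg_of_forall_le_mul {a c : ℝ} (h : ∀ s ≥ 0, c ≤ a * s) : 0 ≤ a := by
  by_contra! ha
  have hs : 0 ≤ (|c| + 1) / -a := div_nonneg (by positivity) (neg_nonneg.2 ha.le)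
  have hval : a * ((|c| + 1) / -a) = -(|c| + 1) := by field_simp [ha.ne]
  linarith [h _ hs, neg_abs_le c]

theorem ContinuousOn.intervalIntegrable_of_Ici {E : Type*} [NormedAddCommGroup E] {f : ℝ → E}
    {c a b : ℝ} (hf : ContinuousOn f (Ici c)) (ha : c ≤ a) (hb : c ≤ b) :
    IntervalIntegrable f volume a b :=
  (hf.mono fun _ hx => (le_min ha hb).trans hx.1).intervalIntegrable

theorem monotoneOn_integral_of_nonneg {y : ℝ → ℝ} (hy : ContinuousOn y (Ici 0))
    (hy_nonneg : ∀ u ≥ (0:ℝ), 0 ≤ y u) : MonotoneOn (fun u => ∫ t in (0:ℝ)..u, y t) (Ici 0) :=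
  fun _ ha _ hb hab => intervalIntegral.integral_mono_interval le_rfl ha hab
    (ae_restrict_of_forall_mem measurableSet_Ioc fun t ht => hy_nonneg t ht.1.le)
    (hy.intervalIntegrable_of_Ici le_rfl hb)

theorem exists_lt_of_forall_integral_le {y : ℝ → ℝ} {a C δ : ℝ}
    (hy : ContinuousOn y (Ici a)) (hC : ∀ v ≥ a, ∫ t in a..v, y t ≤ C) (hδ : 0 < δ) :
    ∃ v ≥ a, y v < δ := by
  by_contra! h
  set v := a + (|C| + 1) / δ
  have hav : a ≤ v := le_add_of_nonneg_right (by positivity)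
  have hlow : ∫ _ in a..v, δ ≤ ∫ t in a..v, y t :=
    intervalIntegral.integral_mono_on hav intervalIntegrable_const
      (hy.intervalIntegrable_of_Ici le_rfl hav) fun t ht => h t ht.1
  rw [intervalIntegral.integral_const, smul_eq_mul, add_sub_cancel_left,
    div_mul_cancel₀ _ hδ.ne'] at hlow
  linarith [hC v hav, le_abs_self C]

theorem integral_comp_min_eq {y : ℝ → ℝ} {u u' : ℝ} (hu : 0 ≤ u) (h : u ≤ u') :
    ∫ t in (0:ℝ)..u, y (min t u') = ∫ t in (0:ℝ)..u, y t :=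
  intervalIntegral.integral_congr fun t ht => by
    rw [uIcc_of_le hu] at ht
    simp only [min_eq_left (ht.2.trans h)]

theorem finiteHorizonFeasible_subset {ψ : ℝ → ℝ} {u' : ℝ} (hu' : 0 ≤ u')
    (hplateau : ∀ u ≥ u', ψ u = ψ u') :
    finiteHorizonFeasible ψ u' ⊆ infiniteHorizonFeasible ψ := by
  rintro β ⟨y, hy, hyu', hfeas⟩
  have hY : ContinuousOn (fun u => y (min u u')) (Ici 0) :=
    hy.comp (continuous_id.min continuous_const).continuousOn
      fun u hu => ⟨le_min hu hu', min_le_right _ _⟩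
  refine ⟨_, hY, fun u hu s hs => ?_⟩
  rcases le_total u u' with h | h
  · simpa only [integral_comp_min_eq hu h, min_eq_left h] using hfeas u ⟨hu, h⟩ s hs
  have htail : ∫ t in u'..u, y (min t u') = 0 := by
    rw [intervalIntegral.integral_congr (g := fun _ => (0:ℝ)) fun t ht => ?_,
      intervalIntegral.integral_zero]
    rw [uIcc_of_le h] at ht
    simp only [min_eq_right ht.1, hyu']
  have hsplit := intervalIntegral.integral_add_adjacent_intervals
    (hY.intervalIntegrable_of_Ici le_rfl hu') (hY.intervalIntegrable_of_Ici hu' hu)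
  rw [← hsplit, htail, add_zero, integral_comp_min_eq hu' le_rfl]
  simpa only [min_eq_right h, hyu', hplateau u h] using hfeas u' ⟨hu', le_rfl⟩ s hs

theorem infiniteHorizon_nonneg {ψ y : ℝ → ℝ} {β : ℝ} (hψ : ∀ s ≥ (0:ℝ), 0 ≤ ψ s)
    (hfeas : ∀ u ≥ (0:ℝ), ∀ s ≥ (0:ℝ), (∫ t in (0:ℝ)..u, y t) ≤ β * ψ u + y u * s - ψ s) :
    ∀ u ≥ (0:ℝ), 0 ≤ y u := fun u hu =>
  nonneg_of_forall_le_mul (c := (∫ t in (0:ℝ)..u, y t) - β * ψ u) fun s hs => by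
    linarith [hfeas u hu s hs, hψ s hs]

theorem infiniteHorizon_integral_le_of_plateau {ψ y : ℝ → ℝ} {β u' : ℝ}
    (hψ : ∀ s ≥ (0:ℝ), 0 ≤ ψ s) (hu' : 0 ≤ u') (hplateau : ∀ u ≥ u', ψ u = ψ u')
    (hy : ContinuousOn y (Ici 0))
    (hfeas : ∀ u ≥ (0:ℝ), ∀ s ≥ (0:ℝ), (∫ t in (0:ℝ)..u, y t) ≤ β * ψ u + y u * s - ψ s) :
    ∀ s ≥ (0:ℝ), ∫ t in (0:ℝ)..u', y t ≤ β * ψ u' - ψ s := by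
  intro s hs
  have hmono := monotoneOn_integral_of_nonneg hy (infiniteHorizon_nonneg hψ hfeas)
  have htail : ∀ v ≥ u', ∫ t in u'..v, y t ≤ β * ψ u' - ∫ t in (0:ℝ)..u', y t := fun v hv => by
    rw [← intervalIntegral.integral_interval_sub_left
      (hy.intervalIntegrable_of_Ici le_rfl (hu'.trans hv))
      (hy.intervalIntegrable_of_Ici le_rfl hu')]
    have hv_feas := hfeas v (hu'.trans hv) 0 le_rfl
    rw [hplateau v hv] at hv_feas
    linarith [hψ 0 le_rfl]
  refine le_of_forall_pos_le_add fun ε hε => ?_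
  obtain ⟨v, hv, hyv⟩ := exists_lt_of_forall_integral_le (hy.mono (Ici_subset_Ici.2 hu')) htail
    (δ := ε / (s + 1)) (by positivity)
  have hslack : y v * s ≤ ε :=
    calc y v * s ≤ ε / (s + 1) * s := mul_le_mul_of_nonneg_right hyv.le hs
      _ ≤ ε / (s + 1) * (s + 1) := by gcongr; linarith
      _ = ε := div_mul_cancel₀ _ (by positivity)
  have hv_feas := hfeas v (hu'.trans hv) s hs
  rw [hplateau v hv] at hv_feas
  linarith [hmono (show u' ∈ Ici 0 from hu') (show v ∈ Ici 0 from hu'.trans hv) hv]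

theorem add_mem_finiteHorizonFeasible {ψ : ℝ → ℝ} {β ε u' : ℝ} (hψ : ∀ s ≥ (0:ℝ), 0 ≤ ψ s)
    (hψc : ContinuousAt ψ u') (hψu' : 0 < ψ u') (hu' : 0 ≤ u') (hplateau : ∀ u ≥ u', ψ u = ψ u')
    (hβ : β ∈ infiniteHorizonFeasible ψ) (hε : 0 < ε) :
    β + ε ∈ finiteHorizonFeasible ψ u' := by
  obtain ⟨y, hy, hfeas⟩ := hβ
  have hy_nonneg := infiniteHorizon_nonneg hψ hfeas
  obtain ⟨η, hη, hnear⟩ : ∃ η > 0, ∀ u, dist u u' < η → β * ψ u' < (β + ε) * ψ u :=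
    Metric.eventually_nhds_iff.1 <|
      (hψc.const_mul (β + ε)).eventually_const_lt (by linarith [mul_pos hε hψu'])
  set φ : ℝ → ℝ := fun u => min 1 ((u' - u) / η)
  have hφ : Continuous φ := continuous_const.min ((continuous_const.sub continuous_id).div_const η)
  refine ⟨fun u => φ u * y u, hφ.continuousOn.mul (hy.mono Icc_subset_Ici_self), by simp [φ],
    fun u hu s hs => ?_⟩
  have hcut : ∫ t in (0:ℝ)..u, φ t * y t ≤ ∫ t in (0:ℝ)..u, y t :=
    intervalIntegral.integral_mono_on hu.1
      ((hφ.continuousOn.mul hy).intervalIntegrable_of_Ici le_rfl hu.1)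
      (hy.intervalIntegrable_of_Ici le_rfl hu.1)
      fun t ht => mul_le_of_le_one_left (hy_nonneg t ht.1) (min_le_left _ _)
  rcases le_or_gt η (u' - u) with h | h
  · have hφu : φ u = 1 := min_eq_left ((one_le_div hη).2 h)
    simp only [hφu, one_mul]
    linarith [hfeas u hu.1 s hs, mul_nonneg hε.le (hψ u hu.1)]
  · have hφu : 0 ≤ φ u := le_min zero_le_one (div_nonneg (sub_nonneg.2 hu.2) hη.le)
    have hcost := hnear u (by rwa [Real.dist_eq, abs_sub_comm, abs_of_nonneg (sub_nonneg.2 hu.2)])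
    have hmono : ∫ t in (0:ℝ)..u, y t ≤ ∫ t in (0:ℝ)..u', y t :=
      monotoneOn_integral_of_nonneg hy hy_nonneg (show u ∈ Ici 0 from hu.1)
        (show u' ∈ Ici 0 from hu') hu.2
    linarith [infiniteHorizon_integral_le_of_plateau hψ hu' hplateau hy hfeas s hs,
      mul_nonneg (mul_nonneg hφu (hy_nonneg u hu.1)) hs]

theorem stmt_14_general (ψ : ℝ → ℝ) (hconc : ConcaveOn ℝ Set.univ ψ)
    (h0 : ψ 0 = 0) (hpos : ∀ u > (0:ℝ), 0 < ψ u)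
    (u' : ℝ) (hu' : 0 < u') (hplateau : ∀ u ≥ u', ψ u = ψ u') :
    sInf {β : ℝ | ∃ y : ℝ → ℝ, ContinuousOn y (Set.Ici 0) ∧
        ∀ u ≥ (0:ℝ), ∀ s ≥ (0:ℝ),
          (∫ t in (0:ℝ)..u, y t) ≤ β * ψ u + y u * s - ψ s} =
    sInf {β : ℝ | ∃ y : ℝ → ℝ, ContinuousOn y (Set.Icc 0 u') ∧ y u' = 0 ∧
        ∀ u ∈ Set.Icc (0:ℝ) u', ∀ s ≥ (0:ℝ),
          (∫ t in (0:ℝ)..u, y t) ≤ β * ψ u + y u * s - ψ s} := by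
  have hψ : ∀ s ≥ (0:ℝ), 0 ≤ ψ s := fun s hs =>
    hs.eq_or_lt.elim (fun h => h ▸ h0.ge) fun h => (hpos s h).le
  have hψc : ContinuousAt ψ u' := (hconc.continuousOn isOpen_univ).continuousAt univ_mem
  exact (Real.sInf_eq_of_subset_of_forall_add_mem (finiteHorizonFeasible_subset hu'.le hplateau)
    fun β hβ ε hε => add_mem_finiteHorizonFeasible hψ hψc (hpos u' hu') hu'.le hplateau hβ hε).symm

/-- Theorem 2: for a plateaued `ψ`, the infinite-horizon smoothing-design
problem and its finite-horizon restriction have the same optimal value. -/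
theorem stmt_14 (ψ : ℝ → ℝ) (hconc : ConcaveOn ℝ Set.univ ψ)
    (hmono : Monotone ψ) (h0 : ψ 0 = 0) (hpos : ∀ u > (0:ℝ), 0 < ψ u)
    (u' : ℝ) (hu' : 0 < u') (hplateau : ∀ u ≥ u', ψ u = ψ u') :
    sInf {β : ℝ | ∃ y : ℝ → ℝ, ContinuousOn y (Set.Ici 0) ∧
        ∀ u ≥ (0:ℝ), ∀ s ≥ (0:ℝ),
          (∫ t in (0:ℝ)..u, y t) ≤ β * ψ u + y u * s - ψ s} =
    sInf {β : ℝ | ∃ y : ℝ → ℝ, ContinuousOn y (Set.Icc 0 u') ∧ y u' = 0 ∧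
        ∀ u ∈ Set.Icc (0:ℝ) u', ∀ s ≥ (0:ℝ),
          (∫ t in (0:ℝ)..u, y t) ≤ β * ψ u + y u * s - ψ s} :=
  stmt_14_general ψ hconc h0 hpos u' hu' hplateau
end

section
/- (Optimal smoothing for adwords.) Let ψ(u) = min(u, 1) and define y : ℝ → ℝ by y(u) = max((e − eᵘ)/(e − 1), 0), and let β = e/(e − 1) = (1 − 1/e)⁻¹. Then (y, β) is feasible for the smoothing-design problem: for all u ≥ 0 and all s ≥ 0, ∫₀ᵘ y(t) dt ≤ β·min(u, 1) + y(u)·s − min(s, 1). (Hence the smoothing y achieves competitive ratio 1/β = 1 − 1/e for the adwords objective.) -/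
/-! With `v = min u 1`, the smoothing vanishes beyond `1`, so `∫₀ᵘ y = (v e − eᵛ + 1)/(e − 1)` and
`y(u) = (e − eᵛ)/(e − 1)`. Clearing the denominator, feasibility becomes
`(e − 1)·min(s, 1) ≤ (e − eᵛ)·s + (eᵛ − 1)`, which holds for every `s` because the difference
is `(eᵛ − 1)(1 − s)` for `s ≤ 1` and `(e − eᵛ)(s − 1)` for `s ≥ 1`, and `1 ≤ eᵛ ≤ e`. -/

open Real

lemma mul_min_one_le_affine {E x : ℝ} (s : ℝ) (h1x : 1 ≤ x) (hxE : x ≤ E) :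
    (E - 1) * min s 1 ≤ (E - x) * s + (x - 1) := by
  rcases le_total s 1 with hs1 | hs1
  · rw [min_eq_left hs1]
    nlinarith
  · rw [min_eq_right hs1]
    nlinarith

noncomputable def adwordsSmoothing (t : ℝ) : ℝ :=
  max ((exp 1 - exp t) / (exp 1 - 1)) 0

lemma exp_one_sub_one_pos : 0 < exp 1 - 1 := by
  linarith [one_lt_exp_iff.mpr one_pos]

lemma adwordsSmoothing_of_le_one {t : ℝ} (ht : t ≤ 1) :
    adwordsSmoothing t = (exp 1 - exp t) / (exp 1 - 1) :=
  max_eq_left <| div_nonneg (sub_nonneg.mpr (exp_le_exp.mpr ht)) exp_one_sub_one_pos.le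

lemma adwordsSmoothing_of_one_le {t : ℝ} (ht : 1 ≤ t) : adwordsSmoothing t = 0 :=
  max_eq_right <| div_nonpos_of_nonpos_of_nonneg (sub_nonpos.mpr (exp_le_exp.mpr ht))
    exp_one_sub_one_pos.le

lemma adwordsSmoothing_eq_min (t : ℝ) :
    adwordsSmoothing t = (exp 1 - exp (min t 1)) / (exp 1 - 1) := by
  rcases le_total t 1 with ht | ht
  · rw [min_eq_left ht, adwordsSmoothing_of_le_one ht]
  · rw [min_eq_right ht, adwordsSmoothing_of_one_le ht, sub_self, zero_div]

lemma integral_adwordsSmoothing_of_le_one {u : ℝ} (hu : u ≤ 1) :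
    ∫ t in (0 : ℝ)..u, adwordsSmoothing t = (u * exp 1 - exp u + 1) / (exp 1 - 1) := by
  have h_eq : ∀ t ∈ Set.uIcc (0 : ℝ) u,
      adwordsSmoothing t = (exp 1 - exp t) / (exp 1 - 1) := fun t ht =>
    adwordsSmoothing_of_le_one (ht.2.trans (max_le zero_le_one hu))
  rw [intervalIntegral.integral_congr h_eq, intervalIntegral.integral_div,
    intervalIntegral.integral_sub intervalIntegrable_const
      (continuous_exp.intervalIntegrable 0 u),
    intervalIntegral.integral_const, integral_exp, smul_eq_mul, exp_zero]
  ring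

lemma integral_adwordsSmoothing (u : ℝ) :
    ∫ t in (0 : ℝ)..u, adwordsSmoothing t =
      (min u 1 * exp 1 - exp (min u 1) + 1) / (exp 1 - 1) := by
  rcases le_total u 1 with hu | hu
  · rw [min_eq_left hu, integral_adwordsSmoothing_of_le_one hu]
  have h_cont : Continuous adwordsSmoothing := by
    unfold adwordsSmoothing; fun_prop
  have h_tail : ∫ t in (1 : ℝ)..u, adwordsSmoothing t = 0 := by
    rw [intervalIntegral.integral_congr (g := fun _ => 0) fun t ht =>
      adwordsSmoothing_of_one_le (by simpa [hu] using ht.1)]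
    simp
  rw [min_eq_right hu, ← intervalIntegral.integral_add_adjacent_intervals
    (h_cont.intervalIntegrable 0 1) (h_cont.intervalIntegrable 1 u), h_tail, add_zero,
    integral_adwordsSmoothing_of_le_one le_rfl]

/-- Optimal smoothing for adwords: `y(u) = ((e − eᵘ)/(e − 1))₊` together with
`β = e/(e − 1)` is feasible for the smoothing-design problem for
`ψ(u) = min(u, 1)`. -/
theorem stmt_15 :
    ∀ u ≥ (0:ℝ), ∀ s ≥ (0:ℝ),
      (∫ t in (0:ℝ)..u, max ((Real.exp 1 - Real.exp t) / (Real.exp 1 - 1)) 0) ≤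
        (Real.exp 1 / (Real.exp 1 - 1)) * min u 1 +
          (max ((Real.exp 1 - Real.exp u) / (Real.exp 1 - 1)) 0) * s - min s 1 := by
  intro u hu s _
  change ∫ t in (0 : ℝ)..u, adwordsSmoothing t ≤
    exp 1 / (exp 1 - 1) * min u 1 + adwordsSmoothing u * s - min s 1
  rw [integral_adwordsSmoothing, adwordsSmoothing_eq_min]
  have key := mul_min_one_le_affine (E := exp 1) s (one_le_exp (le_min hu zero_le_one))
    (exp_le_exp.mpr (min_le_right u 1))
  have hc := exp_one_sub_one_pos
  field_simp
  linarith
end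

section
/- Let n ≥ 1 and let A₀ be a real symmetric positive definite n×n matrix. For every ε > 0 there exists M > 0 such that every real symmetric positive semidefinite n×n matrix U with trace(U) ≥ M satisfies 0 ≤ n − trace((A₀ + U)⁻¹ · A₀) ≤ ε·(log det(A₀ + U) − log det(A₀)). In particular, for ψ(U) = log det(U + A₀) one has ⟨∇ψ(U), U⟩/(ψ(U) − ψ(0)) → 0 as trace(U) → ∞ over the positive semidefinite cone, so ᾱ_ψ = −1. -/
/-!
With `B = A₀ + U`, the quantity `n - tr (B⁻¹ A₀)` equals `tr (B⁻¹ U)`, the trace of a product of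
positive semidefinite matrices, so it lies in `[0, n]`. It therefore suffices that
`det B / det A₀ → ∞`. A lower bound `c > 0` of the spectrum of `A₀` also bounds that of `B ≥ A₀`,
and then `det B = ∏ λᵢ ≥ c ^ (n - 1) · max λᵢ ≥ c ^ (n - 1) · tr B / n ≥ c ^ (n - 1) · tr U / n`.
-/

open scoped MatrixOrder

lemma Finset.sum_mul_pow_le_card_mul_prod {κ : Type*} {s : Finset κ} {f : κ → ℝ} {c : ℝ}
    (hc : 0 ≤ c) (hf : ∀ i ∈ s, c ≤ f i) :
    (∑ i ∈ s, f i) * c ^ (s.card - 1) ≤ s.card * ∏ i ∈ s, f i := by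
  classical
  rw [Finset.sum_mul, ← nsmul_eq_mul, ← Finset.sum_const]
  refine Finset.sum_le_sum fun i hi => ?_
  rw [← Finset.mul_prod_erase s f hi, ← Finset.card_erase_of_mem hi, ← Finset.prod_const]
  exact mul_le_mul_of_nonneg_left
    (Finset.prod_le_prod (fun _ _ => hc) fun j hj => hf j (Finset.mem_of_mem_erase hj))
    (hc.trans (hf i hi))

namespace Matrix

variable {ι : Type*} [Fintype ι] [DecidableEq ι]

lemma trace_inv_add_mul_add_trace_inv_add_mul {K : Type*} [Field K] {A U : Matrix ι ι K}
    (h : IsUnit (A + U).det) :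
    ((A + U)⁻¹ * A).trace + ((A + U)⁻¹ * U).trace = Fintype.card ι := by
  rw [← trace_add, ← Matrix.mul_add, nonsing_inv_mul _ h, trace_one]

lemma PosSemidef.trace_mul_nonneg {P Q : Matrix ι ι ℝ} (hP : P.PosSemidef)
    (hQ : Q.PosSemidef) : 0 ≤ (P * Q).trace := by
  obtain ⟨W, rfl⟩ := CStarAlgebra.nonneg_iff_eq_star_mul_self.mp hQ.nonneg
  rw [← Matrix.mul_assoc, trace_mul_cycle]
  exact (hP.mul_mul_conjTranspose_same W).trace_nonneg

lemma IsHermitian.algebraMap_le_iff_le_eigenvalues {A : Matrix ι ι ℝ} (hA : A.IsHermitian)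
    {c : ℝ} : algebraMap ℝ _ c ≤ A ↔ ∀ i, c ≤ hA.eigenvalues i := by
  rw [algebraMap_le_iff_le_spectrum hA.isSelfAdjoint, hA.spectrum_real_eq_range_eigenvalues]
  simp

lemma PosDef.exists_algebraMap_le {A : Matrix ι ι ℝ} (hA : A.PosDef) :
    ∃ c > 0, algebraMap ℝ _ c ≤ A := by
  have h : ∀ᶠ c in nhdsWithin (0 : ℝ) (Set.Ioi 0), 0 < c ∧ ∀ i, c ≤ hA.1.eigenvalues i :=
    Filter.Eventually.and self_mem_nhdsWithin <| Filter.eventually_all.2 fun i =>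
      (eventually_le_nhds (hA.eigenvalues_pos i)).filter_mono nhdsWithin_le_nhds
  obtain ⟨c, hc, hle⟩ := h.exists
  exact ⟨c, hc, hA.1.algebraMap_le_iff_le_eigenvalues.2 hle⟩

lemma IsHermitian.trace_mul_pow_le_card_mul_det {B : Matrix ι ι ℝ} (hB : B.IsHermitian)
    {c : ℝ} (hc : 0 ≤ c) (hcB : algebraMap ℝ _ c ≤ B) :
    B.trace * c ^ (Fintype.card ι - 1) ≤ Fintype.card ι * B.det := by
  rw [hB.trace_eq_sum_eigenvalues, hB.det_eq_prod_eigenvalues]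
  simpa using Finset.sum_mul_pow_le_card_mul_prod (s := Finset.univ) hc
    fun i _ => hB.algebraMap_le_iff_le_eigenvalues.1 hcB i

end Matrix

open Matrix

/-- For `ψ(U) = log det(U + A₀)` on the positive semidefinite cone,
`⟨∇ψ(U),U⟩ = n − tr((A₀+U)⁻¹A₀)` is nonnegative and is eventually dominated
by `ε·(ψ(U) − ψ(0))` as `tr(U) → ∞`; hence `ᾱ_ψ = −1`. -/
theorem stmt_18 {n : ℕ} (hn : 1 ≤ n) (A₀ : Matrix (Fin n) (Fin n) ℝ)
    (hA₀ : A₀.PosDef) :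
    ∀ ε > (0:ℝ), ∃ M > (0:ℝ), ∀ U : Matrix (Fin n) (Fin n) ℝ,
      U.PosSemidef → M ≤ U.trace →
        0 ≤ (n : ℝ) - ((A₀ + U)⁻¹ * A₀).trace ∧
        (n : ℝ) - ((A₀ + U)⁻¹ * A₀).trace ≤
          ε * (Real.log (A₀ + U).det - Real.log A₀.det) := by
  intro ε hε
  obtain ⟨c, hc, hcA₀⟩ := hA₀.exists_algebraMap_le
  have hn₀ : (0 : ℝ) < n := by exact_mod_cast hn
  set D := Real.exp (n / ε) * A₀.det
  have hD : 0 < D := mul_pos (Real.exp_pos _) hA₀.det_pos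
  refine ⟨n * D / c ^ (n - 1), by positivity, fun U hU hM => ?_⟩
  have hB : (A₀ + U).PosDef := hA₀.add_posSemidef hU
  have hsplit := trace_inv_add_mul_add_trace_inv_add_mul hB.det_pos.ne'.isUnit
  rw [Fintype.card_fin] at hsplit
  have hinvU := hB.inv.posSemidef.trace_mul_nonneg hU
  have hinvA₀ := hB.inv.posSemidef.trace_mul_nonneg hA₀.posSemidef
  have hdet : D ≤ (A₀ + U).det := by
    have hgrowth := hB.1.trace_mul_pow_le_card_mul_det hc.le
      (hcA₀.trans (le_add_of_nonneg_right hU.nonneg))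
    rw [Fintype.card_fin] at hgrowth
    have htr : U.trace ≤ (A₀ + U).trace := by
      rw [trace_add]
      linarith [hA₀.posSemidef.trace_nonneg]
    rw [div_le_iff₀ (pow_pos hc _)] at hM
    refine le_of_mul_le_mul_left ?_ hn₀
    calc n * D ≤ U.trace * c ^ (n - 1) := hM
      _ ≤ (A₀ + U).trace * c ^ (n - 1) := by gcongr
      _ ≤ n * (A₀ + U).det := hgrowth
  have hlog : n / ε ≤ Real.log (A₀ + U).det - Real.log A₀.det := by
    rw [← Real.log_div hB.det_pos.ne' hA₀.det_pos.ne',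
      Real.le_log_iff_exp_le (div_pos hB.det_pos hA₀.det_pos), le_div_iff₀ hA₀.det_pos]
    exact hdet
  refine ⟨by linarith, ?_⟩
  calc (n : ℝ) - ((A₀ + U)⁻¹ * A₀).trace ≤ n := by linarith
    _ = ε * (n / ε) := by field_simp
    _ ≤ _ := mul_le_mul_of_nonneg_left hlog hε.le
end
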